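/- arXiv:2104.02707 — 5 statements merged into one kernel-verified Lean document; each statement's English description precedes it below -/
import Mathlib

section
/- For every $f \in L^2[0,1]$, $\|W_N T_N W_N^*(f) - V(f)\|_{L^2} \to 0$ as $N \to \infty$; that is, $W_N T_N W_N^* \to V$ in the strong operator topology. -/
/-!
On the cell `[i/N, (i+1)/N]` the function `W_N T_N W_N^* f` is constant, equal to
`√N · (T_N W_N^* f)_i = ∑_{j ≤ i} ∫_{cell j} f = ∫_0^{(i+1)/N} f`. Hence at almost every `x` its
difference from `V f (x) = ∫_0^x f` is the integral of `f` over an interval of length at most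
`1/N`, which Cauchy–Schwarz bounds by `‖f‖ / √N`. Since `μ01` is a probability measure, the same
bound holds for the `L²` norm.
-/

open MeasureTheory ProbabilityTheory Filter

noncomputable section

/-- Lebesgue measure restricted to the unit interval `[0,1]`. -/
def μ01 : Measure ℝ := volume.restrict (Set.Icc (0:ℝ) 1)

instance : IsFiniteMeasure μ01 :=
  ⟨by
    simp only [μ01, Measure.restrict_apply_univ]
    simp [Real.volume_Icc]⟩

/-- The function `e_i^N = √N · 𝟙_{[i/N,(i+1)/N]}` as an element of `L²[0,1]`
(here `i : Fin N` runs over `0, …, N-1`, corresponding to `1, …, N` in the paper). -/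
def eN (N : ℕ) (i : Fin N) : Lp ℂ 2 μ01 :=
  indicatorConstLp 2 (measurableSet_Icc :
      MeasurableSet (Set.Icc ((i : ℝ) / N) (((i : ℝ) + 1) / N)))
    (measure_ne_top μ01 _) ((Real.sqrt N : ℝ) : ℂ)

/-- The isometry `W_N : ℂ^N → L²[0,1]`, `(a_1,…,a_N) ↦ ∑ a_i e_i^N`. -/
def Wmap (N : ℕ) (a : EuclideanSpace ℂ (Fin N)) : Lp ℂ 2 μ01 :=
  ∑ i : Fin N, a i • eN N i

/-- The adjoint `W_N^* : L²[0,1] → ℂ^N`, `f ↦ (⟨f,e_1^N⟩, …, ⟨f,e_N^N⟩)`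
(recall that Mathlib's inner product is conjugate-linear in the *first* slot,
so the paper's `⟨f, e⟩` is `inner e f`). -/
def Wstar (N : ℕ) (f : Lp ℂ 2 μ01) : EuclideanSpace ℂ (Fin N) :=
  (WithLp.equiv 2 (Fin N → ℂ)).symm fun i => @inner ℂ _ _ (eN N i) f

/-- The deterministic lower-triangular matrix `T_N` whose entries on and below
the diagonal all equal `1/N`. -/
def TM (N : ℕ) : Matrix (Fin N) (Fin N) ℂ :=
  Matrix.of fun i j => if j ≤ i then ((N : ℂ))⁻¹ else 0

/-- Real-valued version of `T_N`. -/
def TMr (N : ℕ) : Matrix (Fin N) (Fin N) ℝ :=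
  Matrix.of fun i j => if j ≤ i then ((N : ℝ))⁻¹ else 0

/-- The random matrix `X_N(ω) = (1/N)(X_{i,j}(ω))_{i,j}` (complex-valued version;
the hypothesis that the entries above the diagonal vanish is imposed separately). -/
def XM {Ω : Type*} (N : ℕ) (X : Fin N → Fin N → Ω → ℝ) (ω : Ω) :
    Matrix (Fin N) (Fin N) ℂ :=
  Matrix.of fun i j => ((N : ℂ))⁻¹ * (X i j ω : ℂ)

/-- The random matrix `X_N(ω) = (1/N)(X_{i,j}(ω))_{i,j}` (real-valued version). -/
def XMr {Ω : Type*} (N : ℕ) (X : Fin N → Fin N → Ω → ℝ) (ω : Ω) :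
    Matrix (Fin N) (Fin N) ℝ :=
  Matrix.of fun i j => ((N : ℝ))⁻¹ * X i j ω

/-- A matrix acting as an operator on `ℂ^N` (with its euclidean structure). -/
def matVec {N : ℕ} (M : Matrix (Fin N) (Fin N) ℂ) (u : EuclideanSpace ℂ (Fin N)) :
    EuclideanSpace ℂ (Fin N) :=
  Matrix.toEuclideanLin M u

/-- The index set of the (closed) lower triangle of an `N × N` matrix. -/
def LTri (N : ℕ) : Type := {p : Fin N × Fin N // p.2 ≤ p.1}

/-- `V : L²[0,1] → L²[0,1]` is the Volterra operator: `V(f)(x) = ∫_0^x f(t) dt`. -/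
def IsVolterra (V : Lp ℂ 2 μ01 → Lp ℂ 2 μ01) : Prop :=
  ∀ f : Lp ℂ 2 μ01, ∀ᵐ x ∂μ01, (V f : ℝ → ℂ) x = ∫ t in (0:ℝ)..x, (f : ℝ → ℂ) t

open scoped ENNReal InnerProductSpace

theorem norm_setIntegral_le_sqrt_measureReal_mul_norm {α 𝕜 : Type*} [RCLike 𝕜]
    [MeasurableSpace α] {μ : Measure α} {s : Set α} (hs : MeasurableSet s) (hμs : μ s ≠ ∞)
    (f : Lp 𝕜 2 μ) : ‖∫ x in s, f x ∂μ‖ ≤ √(μ.real s) * ‖f‖ := by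
  rw [← L2.inner_indicatorConstLp_one hs hμs f]
  refine (norm_inner_le_norm _ _).trans_eq ?_
  rw [norm_indicatorConstLp two_ne_zero ENNReal.ofNat_ne_top, norm_one, one_mul,
    Real.sqrt_eq_rpow]
  norm_num

theorem eq_of_mem_open_cell_of_mem_cell {N i j : ℕ} {x : ℝ}
    (hi : x ∈ Set.Ioo ((i : ℝ) / N) ((i + 1) / N)) (hj : x ∈ Set.Icc ((j : ℝ) / N) ((j + 1) / N)) :
    i = j := by
  have hN : (0 : ℝ) < N := by
    rcases (Nat.cast_nonneg N : (0 : ℝ) ≤ N).eq_or_lt with h | h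
    · simp [← h] at hi
    · exact h
  have hij : (i : ℝ) < j + 1 := (div_lt_div_iff_of_pos_right hN).mp (hi.1.trans_le hj.2)
  have hji : (j : ℝ) < i + 1 := (div_lt_div_iff_of_pos_right hN).mp (hj.1.trans_lt hi.2)
  norm_cast at hij hji
  omega

instance : IsProbabilityMeasure μ01 := ⟨by simp [μ01]⟩

theorem integrableOn_Icc_of_Lp (f : Lp ℂ 2 μ01) : IntegrableOn f (Set.Icc 0 1) :=
  (Lp.memLp f).integrable one_le_two

theorem intervalIntegrable_of_Lp (f : Lp ℂ 2 μ01) {a b : ℝ} (ha : a ∈ Set.Icc (0 : ℝ) 1)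
    (hb : b ∈ Set.Icc (0 : ℝ) 1) : IntervalIntegrable f volume a b :=
  ((integrableOn_Icc_of_Lp f).mono_set (Set.uIcc_subset_Icc ha hb)).intervalIntegrable

theorem μ01_restrict_Icc {a b : ℝ} (h0 : 0 ≤ a) (hb : b ≤ 1) :
    μ01.restrict (Set.Icc a b) = volume.restrict (Set.Icc a b) :=
  Measure.restrict_restrict_of_subset (Set.Icc_subset_Icc h0 hb)

theorem setIntegral_Icc_μ01 (f : Lp ℂ 2 μ01) {a b : ℝ} (h0 : 0 ≤ a) (hab : a ≤ b) (hb : b ≤ 1) :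
    ∫ x in Set.Icc a b, f x ∂μ01 = (∫ t in (0 : ℝ)..b, f t) - ∫ t in (0 : ℝ)..a, f t := by
  rw [μ01_restrict_Icc h0 hb,
    integral_Icc_eq_integral_Ioc, ← intervalIntegral.integral_of_le hab,
    intervalIntegral.integral_interval_sub_left
      (intervalIntegrable_of_Lp f ⟨le_rfl, zero_le_one⟩ ⟨h0.trans hab, hb⟩)
      (intervalIntegrable_of_Lp f ⟨le_rfl, zero_le_one⟩ ⟨h0, hab.trans hb⟩)]

theorem norm_intervalIntegral_sub_le (f : Lp ℂ 2 μ01) {a b : ℝ} (h0 : 0 ≤ a) (hab : a ≤ b)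
    (hb : b ≤ 1) :
    ‖(∫ t in (0 : ℝ)..b, f t) - ∫ t in (0 : ℝ)..a, f t‖ ≤ √(b - a) * ‖f‖ := by
  rw [← setIntegral_Icc_μ01 f h0 hab hb]
  refine (norm_setIntegral_le_sqrt_measureReal_mul_norm measurableSet_Icc
    (measure_ne_top _ _) f).trans_eq ?_
  rw [← measureReal_restrict_apply_univ, μ01_restrict_Icc h0 hb, measureReal_restrict_apply_univ,
    Real.volume_real_Icc_of_le hab]

theorem inner_eN (N : ℕ) (i : Fin N) (f : Lp ℂ 2 μ01) :
    ⟪eN N i, f⟫_ℂ = √N * ((∫ t in (0 : ℝ)..(((i + 1 : ℕ) : ℝ) / N), f t)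
      - ∫ t in (0 : ℝ)..((i : ℕ) : ℝ) / N, f t) := by
  have hN : (0 : ℝ) < N := by exact_mod_cast i.pos
  rw [eN, L2.inner_indicatorConstLp_eq_inner_setIntegral, RCLike.inner_apply, Complex.conj_ofReal,
    ← setIntegral_Icc_μ01 f (by positivity) (by push_cast; gcongr; linarith) ?_]
  · push_cast
    ring
  · rw [div_le_one hN]
    exact_mod_cast i.isLt

theorem matVec_TM_Wstar_mul_sqrt (N : ℕ) (f : Lp ℂ 2 μ01) (i : Fin N) :
    matVec (TM N) (Wstar N f) i * √N = ∫ t in (0 : ℝ)..((i : ℝ) + 1) / N, f t := by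
  set F : ℕ → ℂ := fun k => ∫ t in (0 : ℝ)..(k : ℝ) / N, f t
  have hN : (N : ℂ) = √N * √N := by
    rw [← Complex.ofReal_mul, Real.mul_self_sqrt (Nat.cast_nonneg N), Complex.ofReal_natCast]
  have hsqrtN : (√N : ℂ) ≠ 0 := by
    have : (0 : ℝ) < N := by exact_mod_cast i.pos
    exact_mod_cast (Real.sqrt_pos.mpr this).ne'
  have hcells : (Finset.range N).filter (· ≤ (i : ℕ)) = Finset.range (i + 1) := by
    ext k
    simp only [Finset.mem_filter, Finset.mem_range]
    omega
  calc matVec (TM N) (Wstar N f) i * √N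
      = ∑ j : Fin N, (if j ≤ i then (N : ℂ)⁻¹ else 0) * ⟪eN N j, f⟫_ℂ * √N :=
        Finset.sum_mul _ _ _
    _ = ∑ k ∈ Finset.range N, if k ≤ (i : ℕ) then F (k + 1) - F k else 0 := by
        rw [← Fin.sum_univ_eq_sum_range (fun k => if k ≤ (i : ℕ) then F (k + 1) - F k else 0)]
        refine Finset.sum_congr rfl fun j _ => ?_
        rw [inner_eN]
        split_ifs with h h' h'
        · rw [hN]
          field_simp
          rfl
        · exact absurd (Fin.le_iff_val_le_val.mp h) h'
        · exact absurd (Fin.le_iff_val_le_val.mpr h') h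
        · ring
    _ = F (i + 1) := by
        rw [← Finset.sum_filter, hcells, Finset.sum_range_sub, sub_eq_self]
        simp [F]
    _ = ∫ t in (0 : ℝ)..((i : ℝ) + 1) / N, f t := by
        simp [F]

theorem Wmap_ae_eq_on_cells (N : ℕ) (a : EuclideanSpace ℂ (Fin N)) :
    ∀ᵐ x ∂μ01, ∀ i : Fin N, x ∈ Set.Ioo ((i : ℝ) / N) (((i : ℝ) + 1) / N) →
      Wmap N a x = a i * √N := by
  have hterms : ∀ᵐ x ∂μ01, ∀ j : Fin N, (a j • eN N j) x
      = a j * (Set.Icc ((j : ℝ) / N) (((j : ℝ) + 1) / N)).indicator (fun _ => (√N : ℂ)) x := by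
    rw [ae_all_iff]
    intro j
    filter_upwards [Lp.coeFn_smul (a j) (eN N j), (indicatorConstLp_coeFn : eN N j =ᵐ[μ01] _)]
      with x hsmul hind
    rw [hsmul, Pi.smul_apply, smul_eq_mul]
    exact congrArg _ hind
  filter_upwards [Lp.coeFn_fun_finsetSum Finset.univ (fun j => a j • eN N j), hterms]
    with x hsum hx i hi
  rw [Wmap, hsum, Finset.sum_congr rfl fun j _ => hx j, Finset.sum_eq_single i]
  · rw [Set.indicator_of_mem (Set.Ioo_subset_Icc_self hi)]
  · intro j _ hji
    rw [Set.indicator_of_notMem, mul_zero]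
    exact fun hj => hji (Fin.ext (eq_of_mem_open_cell_of_mem_cell hi hj)).symm
  · simp

theorem ae_mem_cell {N : ℕ} (hN : 0 < N) :
    ∀ᵐ x ∂μ01, ∃ i : Fin N, x ∈ Set.Ioo ((i : ℝ) / N) (((i : ℝ) + 1) / N) := by
  have hNR : (0 : ℝ) < N := by exact_mod_cast hN
  have hgrid : ∀ᵐ x ∂volume, x ∉ Set.range fun k : ℕ => (k : ℝ) / N :=
    (Set.countable_range _).ae_notMem volume
  filter_upwards [ae_restrict_of_ae hgrid, (ae_restrict_mem measurableSet_Icc :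
    ∀ᵐ x ∂μ01, x ∈ Set.Icc (0 : ℝ) 1)] with x hx hx01
  have hxN : 0 ≤ x * N := mul_nonneg hx01.1 hNR.le
  have hx1 : x < 1 := hx01.2.lt_of_ne fun h => hx ⟨N, by simp [h, hNR.ne']⟩
  refine ⟨⟨⌊x * N⌋₊, (Nat.floor_lt hxN).mpr (by nlinarith)⟩, ?_, ?_⟩
  · refine ((div_le_iff₀ hNR).mpr (Nat.floor_le hxN)).lt_of_ne fun h => hx ⟨_, h⟩
  · exact (lt_div_iff₀ hNR).mpr (Nat.lt_floor_add_one _)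

theorem norm_WTW_sub_volterra_le {V : Lp ℂ 2 μ01 → Lp ℂ 2 μ01} (hV : IsVolterra V)
    (f : Lp ℂ 2 μ01) {N : ℕ} (hN : 0 < N) :
    ‖Wmap N (matVec (TM N) (Wstar N f)) - V f‖ ≤ ‖f‖ / √N := by
  have hNR : (0 : ℝ) < N := by exact_mod_cast hN
  refine (Lp.norm_le_of_ae_bound (C := ‖f‖ / √N) (by positivity) ?_).trans_eq
    (by simp [measureUnivNNReal])
  filter_upwards [Lp.coeFn_sub (Wmap N _) (V f), Wmap_ae_eq_on_cells N (matVec (TM N) (Wstar N f)),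
    ae_mem_cell hN, hV f, (ae_restrict_mem measurableSet_Icc : ∀ᵐ x ∂μ01, x ∈ Set.Icc (0 : ℝ) 1)]
    with x hsub hW ⟨i, hi⟩ hVx hx01
  have hcell_le_one : ((i : ℝ) + 1) / N ≤ 1 := by
    rw [div_le_one hNR]
    exact_mod_cast i.isLt
  rw [hsub, Pi.sub_apply, hW i hi, matVec_TM_Wstar_mul_sqrt, hVx]
  calc _ ≤ √(((i : ℝ) + 1) / N - x) * ‖f‖ :=
        norm_intervalIntegral_sub_le f hx01.1 hi.2.le hcell_le_one
    _ ≤ √(1 / N) * ‖f‖ := by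
        gcongr
        have := hi.1
        rw [add_div]
        linarith
    _ = ‖f‖ / √N := by
        rw [one_div, Real.sqrt_inv, div_eq_mul_inv, mul_comm]

/-- **Lemma 2.1 of the paper.** `W_N T_N W_N^* → V` in the strong operator
topology: for every `f ∈ L²[0,1]`, `‖W_N T_N W_N^*(f) - V(f)‖ → 0`. -/
theorem WTW_tendsto_volterra_SOT
    (V : Lp ℂ 2 μ01 → Lp ℂ 2 μ01) (hV : IsVolterra V)
    (f : Lp ℂ 2 μ01) :
    Tendsto (fun N => ‖Wmap N (matVec (TM N) (Wstar N f)) - V f‖)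
      atTop (nhds 0) := by
  refine squeeze_zero' (Eventually.of_forall fun N => norm_nonneg _)
    ((eventually_gt_atTop 0).mono fun N hN => norm_WTW_sub_volterra_le hV f hN) ?_
  exact tendsto_const_nhds.div_atTop (Real.tendsto_sqrt_atTop.comp tendsto_natCast_atTop_atTop)
end
end

section
/- Let $\{a_N\}_{N=0}^\infty$ be an increasing sequence of positive integers. Suppose there exists a positive sequence $\{k(N)\}$ such that $k(N)\,\sigma_{a_N}/\sqrt{a_N} \to 0$ and $\sum_{N=1}^\infty 1/k(N)^2 < \infty$. Then for every $u \in L^2[0,1]$, almost surely $\|W_{a_N}(\mu_{a_N} T_{a_N} - X_{a_N}) W_{a_N}^* u\|_{L^2} \to 0$ as $N \to \infty$. -/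
open MeasureTheory ProbabilityTheory Filter

noncomputable section

/-! `W_N` is an isometry and `W_N^*` a contraction (the `e_i^N` are orthonormal), so it suffices
to bound `‖(μ T - X) v‖` for `v = W_N^* u`. Each coordinate of `(μ T - X) v` is a sum of
independent centred variables, whence `E ‖(μ T - X) v‖² ≤ σ² / N · ‖v‖²`. With
`ε_N = k(N) σ_{a_N} / √a_N · ‖u‖ + 1 / k(N) → 0`, Chebyshev's inequality bounds the probability
that the `N`-th norm exceeds `ε_N` by `1 / k(N)²`, which is summable, and Borel–Cantelli
concludes. -/

open scoped Topology ENNReal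

theorem Real.volume_Icc_inter_Icc_eq_zero {a b c d : ℝ} (h : b ≤ c) :
    volume (Set.Icc a b ∩ Set.Icc c d) = 0 :=
  measure_mono_null (fun _ hx => le_antisymm (hx.1.2.trans h) hx.2.1) (measure_singleton c)

theorem μ01_real_Icc_div {N : ℕ} (i : Fin N) :
    μ01.real (Set.Icc ((i : ℝ) / N) (((i : ℝ) + 1) / N)) = (N : ℝ)⁻¹ := by
  have hN : (0 : ℝ) < N := by exact_mod_cast i.pos
  have hsub : Set.Icc ((i : ℝ) / N) (((i : ℝ) + 1) / N) ⊆ Set.Icc 0 1 := by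
    refine Set.Icc_subset_Icc (by positivity) ((div_le_one hN).2 ?_)
    exact_mod_cast i.isLt
  rw [μ01, measureReal_restrict_apply measurableSet_Icc, Set.inter_eq_left.2 hsub,
    Real.volume_real_Icc_of_le (by gcongr; linarith)]
  field_simp
  ring

theorem μ01_real_Icc_div_inter_of_ne {N : ℕ} {i j : Fin N} (hij : i ≠ j) :
    μ01.real (Set.Icc ((i : ℝ) / N) (((i : ℝ) + 1) / N) ∩
      Set.Icc ((j : ℝ) / N) (((j : ℝ) + 1) / N)) = 0 := by
  have key : ∀ i j : Fin N, i < j → volume (Set.Icc ((i : ℝ) / N) (((i : ℝ) + 1) / N) ∩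
      Set.Icc ((j : ℝ) / N) (((j : ℝ) + 1) / N)) = 0 := fun i j h =>
    Real.volume_Icc_inter_Icc_eq_zero (by gcongr; exact_mod_cast Fin.val_add_one_le_of_lt h)
  rw [measureReal_eq_zero_iff]
  refine nonpos_iff_eq_zero.1 ((Measure.restrict_le_self _).trans_eq ?_)
  rcases hij.lt_or_gt with h | h
  · exact key i j h
  · rw [Set.inter_comm]; exact key j i h

theorem orthonormal_eN (N : ℕ) : Orthonormal ℂ (eN N) := by
  refine orthonormal_iff_ite.2 fun i j => ?_
  rw [eN, eN, L2.inner_indicatorConstLp_indicatorConstLp, RCLike.inner_apply, Complex.conj_ofReal,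
    ← Complex.ofReal_mul, Real.mul_self_sqrt (Nat.cast_nonneg N)]
  split_ifs with hij
  · subst hij
    rw [Set.inter_self, μ01_real_Icc_div, Complex.real_smul]
    push_cast
    exact inv_mul_cancel₀ (by exact_mod_cast i.pos.ne')
  · rw [μ01_real_Icc_div_inter_of_ne hij, zero_smul]

theorem Orthonormal.norm_sum_smul {𝕜 E ι : Type*} [RCLike 𝕜] [NormedAddCommGroup E]
    [InnerProductSpace 𝕜 E] [Fintype ι] {v : ι → E} (hv : Orthonormal 𝕜 v)
    (x : EuclideanSpace 𝕜 ι) : ‖∑ i, x i • v i‖ = ‖x‖ := by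
  refine (sq_eq_sq₀ (norm_nonneg _) (norm_nonneg _)).1 ?_
  rw [@norm_sq_eq_re_inner 𝕜, hv.inner_sum, EuclideanSpace.norm_sq_eq, map_sum]
  simp_rw [RCLike.conj_mul, ← RCLike.ofReal_pow, RCLike.ofReal_re]

theorem Orthonormal.norm_inner_products_le {𝕜 E ι : Type*} [RCLike 𝕜] [NormedAddCommGroup E]
    [InnerProductSpace 𝕜 E] [Fintype ι] {v : ι → E} (hv : Orthonormal 𝕜 v) (x : E) :
    ‖(WithLp.equiv 2 (ι → 𝕜)).symm fun i => inner 𝕜 (v i) x‖ ≤ ‖x‖ := by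
  refine (sq_le_sq₀ (norm_nonneg _) (norm_nonneg _)).1 ?_
  rw [EuclideanSpace.norm_sq_eq]
  exact hv.sum_inner_products_le x

theorem norm_Wmap (N : ℕ) (v : EuclideanSpace ℂ (Fin N)) : ‖Wmap N v‖ = ‖v‖ :=
  (orthonormal_eN N).norm_sum_smul v

theorem norm_Wstar_le (N : ℕ) (u : Lp ℂ 2 μ01) : ‖Wstar N u‖ ≤ ‖u‖ :=
  (orthonormal_eN N).norm_inner_products_le u

theorem Complex.sq_norm_sum_mul_ofReal {ι : Type*} (s : Finset ι) (c : ι → ℂ) (x : ι → ℝ) :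
    ‖∑ j ∈ s, c j * x j‖ ^ 2 = (∑ j ∈ s, (c j).re * x j) ^ 2 + (∑ j ∈ s, (c j).im * x j) ^ 2 := by
  rw [Complex.sq_norm, Complex.normSq_apply, Complex.re_sum, Complex.im_sum]
  simp only [Complex.re_mul_ofReal, Complex.im_mul_ofReal]
  ring

section CenteredSums

variable {Ω ι : Type*} [MeasurableSpace Ω] {P : Measure Ω}
  {s : Finset ι} {Z : ι → Ω → ℝ}

theorem integral_sq_finsetSum_mul [IsFiniteMeasure P] (hZ : ∀ j ∈ s, MemLp (Z j) 2 P)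
    (h0 : ∀ j ∈ s, P[Z j] = 0) (hind : Set.Pairwise ↑s fun i j => IndepFun (Z i) (Z j) P)
    (r : ι → ℝ) :
    ∫ ω, (∑ j ∈ s, r j * Z j ω) ^ 2 ∂P = ∑ j ∈ s, r j ^ 2 * Var[Z j; P] := by
  have hY : ∀ j ∈ s, MemLp (fun ω => r j * Z j ω) 2 P := fun j hj => (hZ j hj).const_mul (r j)
  have hindY : Set.Pairwise ↑s fun i j =>
      IndepFun (fun ω => r i * Z i ω) (fun ω => r j * Z j ω) P := fun i hi j hj hij =>
    (hind hi hj hij).comp (measurable_const_mul (r i)) (measurable_const_mul (r j))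
  have hmean : P[∑ j ∈ s, fun ω => r j * Z j ω] = 0 := by
    simp_rw [Finset.sum_apply]
    rw [integral_finsetSum s fun j hj => (hY j hj).integrable one_le_two]
    exact Finset.sum_eq_zero fun j hj => by rw [integral_const_mul, h0 j hj, mul_zero]
  calc ∫ ω, (∑ j ∈ s, r j * Z j ω) ^ 2 ∂P = Var[∑ j ∈ s, fun ω => r j * Z j ω; P] := by
        rw [variance_of_integral_eq_zero (memLp_finsetSum' s hY).aemeasurable hmean]
        simp_rw [Finset.sum_apply]
    _ = ∑ j ∈ s, r j ^ 2 * Var[Z j; P] := by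
        rw [IndepFun.variance_sum hY hindY]
        simp_rw [variance_const_mul]

theorem integrable_sq_finsetSum_mul (hZ : ∀ j ∈ s, MemLp (Z j) 2 P) (r : ι → ℝ) :
    Integrable (fun ω => (∑ j ∈ s, r j * Z j ω) ^ 2) P :=
  (memLp_finsetSum s fun j hj => (hZ j hj).const_mul (r j)).integrable_sq

theorem integrable_norm_sq_finsetSum_mul (hZ : ∀ j ∈ s, MemLp (Z j) 2 P) (c : ι → ℂ) :
    Integrable (fun ω => ‖∑ j ∈ s, c j * Z j ω‖ ^ 2) P := by
  simp_rw [Complex.sq_norm_sum_mul_ofReal]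
  exact (integrable_sq_finsetSum_mul hZ _).add (integrable_sq_finsetSum_mul hZ _)

theorem integral_norm_sq_finsetSum_mul [IsFiniteMeasure P] (hZ : ∀ j ∈ s, MemLp (Z j) 2 P)
    (h0 : ∀ j ∈ s, P[Z j] = 0) (hind : Set.Pairwise ↑s fun i j => IndepFun (Z i) (Z j) P)
    (c : ι → ℂ) :
    ∫ ω, ‖∑ j ∈ s, c j * Z j ω‖ ^ 2 ∂P = ∑ j ∈ s, ‖c j‖ ^ 2 * Var[Z j; P] := by
  simp_rw [Complex.sq_norm_sum_mul_ofReal]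
  rw [integral_add (integrable_sq_finsetSum_mul hZ _) (integrable_sq_finsetSum_mul hZ _),
    integral_sq_finsetSum_mul hZ h0 hind, integral_sq_finsetSum_mul hZ h0 hind,
    ← Finset.sum_add_distrib]
  refine Finset.sum_congr rfl fun j _ => ?_
  rw [Complex.sq_norm, Complex.normSq_apply]
  ring

end CenteredSums

section CenteredMatrix

variable {Ω : Type*} {N : ℕ} {X : Fin N → Fin N → Ω → ℝ} {μN σN : ℝ}

theorem matVec_smul_TM_sub_XM_apply (hzero : ∀ i j : Fin N, i < j → ∀ ω, X i j ω = 0)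
    (v : EuclideanSpace ℂ (Fin N)) (ω : Ω) (i : Fin N) :
    matVec ((μN : ℂ) • TM N - XM N X ω) v i =
      ∑ j ∈ Finset.Iic i, ((N : ℂ)⁻¹ * v j) * ((μN - X i j ω : ℝ) : ℂ) := by
  change ∑ j, ((μN : ℂ) • TM N - XM N X ω) i j * v j = _
  rw [← Finset.sum_subset (Finset.subset_univ (Finset.Iic i))]
  · refine Finset.sum_congr rfl fun j hj => ?_
    simp only [Matrix.sub_apply, Matrix.smul_apply, TM, XM, Matrix.of_apply,
      if_pos (Finset.mem_Iic.1 hj), smul_eq_mul]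
    push_cast
    ring
  · intro j _ hj
    have hij : i < j := not_le.1 (Finset.mem_Iic.not.1 hj)
    simp [TM, XM, hij.not_ge, hzero i j hij ω]

theorem norm_sq_matVec_smul_TM_sub_XM (hzero : ∀ i j : Fin N, i < j → ∀ ω, X i j ω = 0)
    (v : EuclideanSpace ℂ (Fin N)) (ω : Ω) :
    ‖matVec ((μN : ℂ) • TM N - XM N X ω) v‖ ^ 2 =
      ∑ i, ‖∑ j ∈ Finset.Iic i, ((N : ℂ)⁻¹ * v j) * ((μN - X i j ω : ℝ) : ℂ)‖ ^ 2 := by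
  simp_rw [EuclideanSpace.norm_sq_eq, matVec_smul_TM_sub_XM_apply hzero]

variable [MeasurableSpace Ω] {P : Measure Ω}

theorem integrable_norm_sq_matVec_smul_TM_sub_XM [IsFiniteMeasure P]
    (hzero : ∀ i j : Fin N, i < j → ∀ ω, X i j ω = 0)
    (hL2 : ∀ i j : Fin N, j ≤ i → MemLp (X i j) 2 P) (v : EuclideanSpace ℂ (Fin N)) :
    Integrable (fun ω => ‖matVec ((μN : ℂ) • TM N - XM N X ω) v‖ ^ 2) P := by
  simp_rw [norm_sq_matVec_smul_TM_sub_XM hzero]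
  refine integrable_finsetSum _ fun i _ => integrable_norm_sq_finsetSum_mul (fun j hj => ?_) _
  exact (memLp_const μN).sub (hL2 i j (Finset.mem_Iic.1 hj))

theorem integral_norm_sq_matVec_smul_TM_sub_XM_le [IsProbabilityMeasure P]
    (hzero : ∀ i j : Fin N, i < j → ∀ ω, X i j ω = 0)
    (hindep : iIndepFun (fun p : LTri N => X p.1.1 p.1.2) P)
    (hL2 : ∀ i j : Fin N, j ≤ i → MemLp (X i j) 2 P)
    (hmean : ∀ i j : Fin N, j ≤ i → P[X i j] = μN)
    (hvar : ∀ i j : Fin N, j ≤ i → Var[X i j; P] = σN ^ 2) (v : EuclideanSpace ℂ (Fin N)) :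
    ∫ ω, ‖matVec ((μN : ℂ) • TM N - XM N X ω) v‖ ^ 2 ∂P ≤ σN ^ 2 / N * ‖v‖ ^ 2 := by
  have hZ (i : Fin N) : ∀ j ∈ Finset.Iic i, MemLp (fun ω => μN - X i j ω) 2 P :=
    fun j hj => (memLp_const μN).sub (hL2 i j (Finset.mem_Iic.1 hj))
  have h0 (i : Fin N) : ∀ j ∈ Finset.Iic i, P[fun ω => μN - X i j ω] = 0 := fun j hj => by
    rw [integral_sub (integrable_const _) ((hL2 i j (Finset.mem_Iic.1 hj)).integrable one_le_two),
      hmean i j (Finset.mem_Iic.1 hj), integral_const, probReal_univ, one_smul, sub_self]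
  have hind (i : Fin N) : Set.Pairwise ↑(Finset.Iic i) fun j j' =>
      IndepFun (fun ω => μN - X i j ω) (fun ω => μN - X i j' ω) P := by
    intro j hj j' hj' hjj'
    have hpq : (⟨(i, j), Finset.mem_Iic.1 hj⟩ : LTri N) ≠ ⟨(i, j'), Finset.mem_Iic.1 hj'⟩ :=
      fun h => hjj' (congrArg (fun p : LTri N => p.1.2) h)
    exact (hindep.indepFun hpq).comp (measurable_const_sub μN) (measurable_const_sub μN)
  have hvarZ (i j : Fin N) (hj : j ∈ Finset.Iic i) : Var[fun ω => μN - X i j ω; P] = σN ^ 2 := by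
    rw [variance_const_sub (hL2 i j (Finset.mem_Iic.1 hj)).1, hvar i j (Finset.mem_Iic.1 hj)]
  simp_rw [norm_sq_matVec_smul_TM_sub_XM hzero]
  rw [integral_finsetSum _ fun i _ => integrable_norm_sq_finsetSum_mul (hZ i) _]
  calc ∑ i, ∫ ω, ‖∑ j ∈ Finset.Iic i, ((N : ℂ)⁻¹ * v j) * ((μN - X i j ω : ℝ) : ℂ)‖ ^ 2 ∂P
      = ∑ i, ∑ j ∈ Finset.Iic i, ‖(N : ℂ)⁻¹ * v j‖ ^ 2 * σN ^ 2 := by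
        refine Finset.sum_congr rfl fun i _ => ?_
        rw [integral_norm_sq_finsetSum_mul (hZ i) (h0 i) (hind i)]
        exact Finset.sum_congr rfl fun j hj => by rw [hvarZ i j hj]
    _ ≤ ∑ _i : Fin N, ∑ j, ‖(N : ℂ)⁻¹ * v j‖ ^ 2 * σN ^ 2 :=
        Finset.sum_le_sum fun i _ => Finset.sum_le_sum_of_subset_of_nonneg
          (Finset.subset_univ _) fun _ _ _ => by positivity
    _ = σN ^ 2 / N * ‖v‖ ^ 2 := by
        simp_rw [Finset.sum_const, Finset.card_univ, Fintype.card_fin, EuclideanSpace.norm_sq_eq,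
          norm_mul, norm_inv, Complex.norm_natCast, mul_pow, nsmul_eq_mul, Finset.mul_sum]
        refine Finset.sum_congr rfl fun j _ => ?_
        rcases eq_or_ne (N : ℝ) 0 with hN | hN
        · simp [hN]
        · field_simp

end CenteredMatrix

theorem tendsto_zero_of_summable_sq {x : ℕ → ℝ} (h : Summable fun n => x n ^ 2) :
    Tendsto x atTop (𝓝 0) := by
  have h' := h.tendsto_atTop_zero.sqrt
  simp_rw [Real.sqrt_sq_eq_abs, Real.sqrt_zero] at h'
  exact (tendsto_zero_iff_abs_tendsto_zero _).2 h'

theorem ae_tendsto_zero_of_summable_integral_sq_div {Ω : Type*} [MeasurableSpace Ω]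
    {P : Measure Ω} [IsFiniteMeasure P] {f : ℕ → Ω → ℝ} {ε : ℕ → ℝ}
    (hf : ∀ m, Integrable (fun ω => f m ω ^ 2) P) (hε : ∀ m, 0 < ε m)
    (hε0 : Tendsto ε atTop (𝓝 0)) (hsum : Summable fun m => (∫ ω, f m ω ^ 2 ∂P) / ε m ^ 2) :
    ∀ᵐ ω ∂P, Tendsto (fun m => f m ω) atTop (𝓝 0) := by
  set A : ℕ → Set Ω := fun m => {ω | ε m ^ 2 ≤ f m ω ^ 2}
  have hA (m : ℕ) : P (A m) ≤ ENNReal.ofReal ((∫ ω, f m ω ^ 2 ∂P) / ε m ^ 2) := by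
    rw [← ofReal_measureReal]
    refine ENNReal.ofReal_le_ofReal ((le_div_iff₀' (pow_pos (hε m) 2)).2 ?_)
    exact mul_meas_ge_le_integral_of_nonneg (ae_of_all _ fun ω => sq_nonneg _) (hf m) _
  have hA_sum : ∑' m, P (A m) ≠ ∞ := by
    refine ne_top_of_le_ne_top ?_ (ENNReal.tsum_le_tsum hA)
    rw [← ENNReal.ofReal_tsum_of_nonneg
      (fun m => div_nonneg (integral_nonneg fun ω => sq_nonneg _) (sq_nonneg _)) hsum]
    exact ENNReal.ofReal_ne_top
  filter_upwards [ae_eventually_notMem hA_sum] with ω hω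
  refine squeeze_zero_norm' ?_ hε0
  filter_upwards [hω] with m hm
  exact (abs_lt_of_sq_lt_sq (not_le.1 hm) (hε m).le).le

theorem as_convergence_of_centered_part_general
    {Ω : Type*} [MeasureSpace Ω] [IsProbabilityMeasure (ℙ : Measure Ω)]
    (X : (N : ℕ) → Fin N → Fin N → Ω → ℝ)
    (μs σs : ℕ → ℝ) (hσ : ∀ N, 0 ≤ σs N)
    (hzero : ∀ N (i j : Fin N), i < j → ∀ ω, X N i j ω = 0)
    (hindep : ∀ N, iIndepFun
      (fun p : LTri N => X N p.1.1 p.1.2) ℙ)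
    (hL2 : ∀ N (i j : Fin N), j ≤ i → MemLp (X N i j) 2 ℙ)
    (hmean : ∀ N (i j : Fin N), j ≤ i → ∫ ω, X N i j ω ∂ℙ = μs N)
    (hvar : ∀ N (i j : Fin N), j ≤ i → variance (X N i j) ℙ = (σs N) ^ 2)
    (a : ℕ → ℕ)
    (k : ℕ → ℝ) (hk : ∀ N, 0 < k N)
    (hkσ : Tendsto (fun N => k N * σs (a N) / Real.sqrt (a N)) atTop (nhds 0))
    (hksum : Summable fun N => 1 / (k N) ^ 2)
    (u : Lp ℂ 2 μ01) :
    ∀ᵐ ω ∂ℙ, Tendsto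
      (fun N => ‖Wmap (a N) (matVec
        ((μs (a N) : ℂ) • TM (a N) - XM (a N) (X (a N)) ω)
        (Wstar (a N) u))‖)
      atTop (nhds 0) := by
  set δ : ℕ → ℝ := fun m => k m * σs (a m) / Real.sqrt (a m) * ‖u‖
  have hδ (m : ℕ) : 0 ≤ δ m := by have := hk m; have := hσ (a m); positivity
  have hε (m : ℕ) : 0 < δ m + 1 / k m := add_pos_of_nonneg_of_pos (hδ m) (one_div_pos.2 (hk m))
  have hk_inv : Tendsto (fun m => 1 / k m) atTop (𝓝 0) :=
    tendsto_zero_of_summable_sq (by simpa only [one_div_pow] using hksum)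
  have hbound (m : ℕ) : ∫ ω, ‖matVec ((μs (a m) : ℂ) • TM (a m) - XM (a m) (X (a m)) ω)
      (Wstar (a m) u)‖ ^ 2 ≤ (δ m + 1 / k m) ^ 2 * (1 / k m ^ 2) := by
    calc _ ≤ σs (a m) ^ 2 / a m * ‖Wstar (a m) u‖ ^ 2 :=
          integral_norm_sq_matVec_smul_TM_sub_XM_le (hzero _) (hindep _) (hL2 _) (hmean _)
            (hvar _) _
      _ ≤ σs (a m) ^ 2 / a m * ‖u‖ ^ 2 := by gcongr; exact norm_Wstar_le _ u
      _ = δ m ^ 2 * (1 / k m ^ 2) := by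
          have := (hk m).ne'
          simp only [δ, div_pow, mul_pow, Real.sq_sqrt (Nat.cast_nonneg (a m))]
          field_simp
      _ ≤ (δ m + 1 / k m) ^ 2 * (1 / k m ^ 2) := by
          have := hk m; gcongr; exacts [hδ m, le_add_of_nonneg_right (by positivity)]
  simp_rw [norm_Wmap]
  refine ae_tendsto_zero_of_summable_integral_sq_div (ε := fun m => δ m + 1 / k m)
    (fun m => integrable_norm_sq_matVec_smul_TM_sub_XM (hzero _) (hL2 _) _) hε ?_ ?_
  · simpa using (hkσ.mul_const ‖u‖).add hk_inv
  · refine Summable.of_nonneg_of_le (fun m => by positivity) (fun m => ?_) hksum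
    rw [div_le_iff₀ (pow_pos (hε m) 2), mul_comm]
    exact hbound m

/-- **Lemma 2.3 of the paper.** If `{a_N}` is an increasing sequence of positive
integers and there is a positive sequence `{k(N)}` with `k(N)·σ_{a_N}/√(a_N) → 0`
and `∑ 1/k(N)² < ∞`, then for every `u ∈ L²[0,1]`, almost surely
`‖W_{a_N}(μ_{a_N} T_{a_N} - X_{a_N}) W_{a_N}^* u‖ → 0`. -/
theorem as_convergence_of_centered_part
    {Ω : Type*} [MeasureSpace Ω] [IsProbabilityMeasure (ℙ : Measure Ω)]
    (X : (N : ℕ) → Fin N → Fin N → Ω → ℝ)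
    (μs σs : ℕ → ℝ) (hσ : ∀ N, 0 ≤ σs N)
    (hmeas : ∀ N (i j : Fin N), Measurable (X N i j))
    (hzero : ∀ N (i j : Fin N), i < j → ∀ ω, X N i j ω = 0)
    (hindep : ∀ N, iIndepFun
      (fun p : LTri N => X N p.1.1 p.1.2) ℙ)
    (hident : ∀ N (p q : LTri N),
      IdentDistrib (X N p.1.1 p.1.2) (X N q.1.1 q.1.2) ℙ ℙ)
    (hL2 : ∀ N (i j : Fin N), j ≤ i → MemLp (X N i j) 2 ℙ)
    (hmean : ∀ N (i j : Fin N), j ≤ i → ∫ ω, X N i j ω ∂ℙ = μs N)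
    (hvar : ∀ N (i j : Fin N), j ≤ i → variance (X N i j) ℙ = (σs N) ^ 2)
    (a : ℕ → ℕ) (ha : StrictMono a) (ha0 : ∀ N, 0 < a N)
    (k : ℕ → ℝ) (hk : ∀ N, 0 < k N)
    (hkσ : Tendsto (fun N => k N * σs (a N) / Real.sqrt (a N)) atTop (nhds 0))
    (hksum : Summable fun N => 1 / (k N) ^ 2)
    (u : Lp ℂ 2 μ01) :
    ∀ᵐ ω ∂ℙ, Tendsto
      (fun N => ‖Wmap (a N) (matVec
        ((μs (a N) : ℂ) • TM (a N) - XM (a N) (X (a N)) ω)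
        (Wstar (a N) u))‖)
      atTop (nhds 0) :=
  as_convergence_of_centered_part_general X μs σs hσ hzero hindep hL2 hmean hvar a k hk hkσ hksum u

end
end

section
/- Let $X_N$ be the random lower triangular matrix whose entries on and below the diagonal are i.i.d., each equal to $\frac{1}{\delta(N)\,N}$ with probability $\delta(N)$ and $0$ otherwise (so $\mu_N = 1$ and $\sigma_N^2 = \frac{1 - \delta(N)}{\delta(N)}$ for the rescaled entries). If $\delta(N)$ is bounded below by a positive constant, then for all $u, v \in L^2[0,1]$, almost surely $\langle W_N X_N W_N^*(u), v\rangle \to \langle V(u), v\rangle$ as $N \to \infty$. -/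
/-!
Expanding in the orthonormal family `e_i^N`, the pairing `⟨W_N X_N W_N^* u, v⟩` splits into the
same pairing with `X_N` replaced by its mean `T_N`, plus a fluctuation
`∑_{j ≤ i} a_{ij} (X_{ij} - 1)` with `a_{ij} = N⁻¹ ⟨u, e_j⟩ ⟨e_i, v⟩`.

The deterministic part is `∫ v̄ · U_N`, where `U_N` is the primitive `U(x) = ∫_0^x u` sampled at the
right end point of each cell `[i/N, (i+1)/N]`. Since `U` is `1/2`-Hölder with constant `‖u‖`, it is
within `N^{-1/2} ‖u‖ ‖v‖₁` of `∫ v̄ · U = ⟨V u, v⟩`.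

The fluctuation is a sum of independent centred terms, so its second moment is
`∑ |a_{ij}|² σ_N² ≤ c⁻¹ ‖u‖² ‖v‖² / N²` by Bessel's inequality. These bounds are summable in `N`,
which forces the fluctuation to tend to `0` almost surely.
-/

open MeasureTheory ProbabilityTheory Filter

noncomputable section

namespace SparseBernoulli

open Set Finset
open scoped InnerProductSpace ComplexConjugate Topology ENNReal

section SecondMoment

variable {Ω : Type*} [MeasurableSpace Ω] {μ : Measure Ω} [IsProbabilityMeasure μ]
  {ι : Type*} {s : Finset ι} {X : ι → Ω → ℝ}

lemma integral_sq_sum_mul_sub_integral (hX : ∀ i ∈ s, MemLp (X i) 2 μ)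
    (hind : Set.Pairwise ↑s fun i j => X i ⟂ᵢ[μ] X j) (b : ι → ℝ) :
    ∫ ω, (∑ i ∈ s, b i * (X i ω - μ[X i])) ^ 2 ∂μ = ∑ i ∈ s, b i ^ 2 * Var[X i; μ] := by
  set Y : ι → Ω → ℝ := fun i ω => b i * (X i ω - μ[X i])
  have hY : ∀ i ∈ s, MemLp (Y i) 2 μ := fun i hi =>
    ((hX i hi).sub (memLp_const _)).const_mul (b i)
  have hYind : Set.Pairwise ↑s fun i j => Y i ⟂ᵢ[μ] Y j := fun i hi j hj hij =>
    (hind hi hj hij).comp ((measurable_id.sub_const _).const_mul _)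
      ((measurable_id.sub_const _).const_mul _)
  have hmean : μ[∑ i ∈ s, Y i] = 0 := by
    simp only [Finset.sum_apply]
    rw [integral_finsetSum s fun i hi => (hY i hi).integrable one_le_two]
    refine sum_eq_zero fun i hi => ?_
    rw [integral_const_mul, integral_sub ((hX i hi).integrable one_le_two) (integrable_const _),
      integral_const, probReal_univ, one_smul, sub_self, mul_zero]
  have hsum : ∀ ω, (∑ i ∈ s, Y i) ω = ∑ i ∈ s, b i * (X i ω - μ[X i]) := fun ω =>
    Finset.sum_apply ω s Y
  simp_rw [← hsum]
  rw [← variance_of_integral_eq_zero (memLp_finsetSum' s hY).aemeasurable hmean,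
    IndepFun.variance_sum hY hYind]
  refine sum_congr rfl fun i hi => ?_
  rw [variance_const_mul, variance_sub_const (hX i hi).aestronglyMeasurable]

lemma integral_norm_sq_sum_mul_sub_integral (hX : ∀ i ∈ s, MemLp (X i) 2 μ)
    (hind : Set.Pairwise ↑s fun i j => X i ⟂ᵢ[μ] X j) (a : ι → ℂ) :
    ∫ ω, ‖∑ i ∈ s, a i * ((X i ω - μ[X i] : ℝ) : ℂ)‖ ^ 2 ∂μ =
      ∑ i ∈ s, ‖a i‖ ^ 2 * Var[X i; μ] := by
  have hpart : ∀ b : ι → ℝ, Integrable (fun ω => (∑ i ∈ s, b i * (X i ω - μ[X i])) ^ 2) μ :=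
    fun b => (memLp_finsetSum s fun i hi =>
      ((hX i hi).sub (memLp_const _)).const_mul (b i)).integrable_sq
  have hnorm : ∀ ω, ‖∑ i ∈ s, a i * ((X i ω - μ[X i] : ℝ) : ℂ)‖ ^ 2 =
      (∑ i ∈ s, (a i).re * (X i ω - μ[X i])) ^ 2 +
        (∑ i ∈ s, (a i).im * (X i ω - μ[X i])) ^ 2 := by
    intro ω
    rw [Complex.sq_norm, Complex.normSq_apply, Complex.re_sum, Complex.im_sum]
    simp only [Complex.mul_re, Complex.mul_im, Complex.ofReal_re, Complex.ofReal_im, mul_zero,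
      sub_zero, zero_add]
    ring
  simp_rw [hnorm]
  rw [integral_add (hpart _) (hpart _), integral_sq_sum_mul_sub_integral hX hind,
    integral_sq_sum_mul_sub_integral hX hind, ← sum_add_distrib]
  refine sum_congr rfl fun i _ => ?_
  rw [Complex.sq_norm, Complex.normSq_apply]
  ring

end SecondMoment

lemma eq_indicator_of_bernoulli {Ω : Type*} {Y : Ω → ℝ} {d : ℝ} (hd : 0 < d)
    (hvals : ∀ ω, Y ω = d⁻¹ ∨ Y ω = 0) : Y = {ω | Y ω = d⁻¹}.indicator fun _ => d⁻¹ := by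
  ext ω
  rcases hvals ω with h | h
  · rw [indicator_of_mem (by exact h), h]
  · rw [indicator_of_notMem (by simp [h, hd.ne]), h]

section Bernoulli

variable {Ω : Type*} [MeasurableSpace Ω] {μ : Measure Ω} {Y : Ω → ℝ} {d : ℝ}

lemma memLp_of_bernoulli [IsFiniteMeasure μ] (hd : 0 < d) (hY : Measurable Y)
    (hvals : ∀ ω, Y ω = d⁻¹ ∨ Y ω = 0) : MemLp Y 2 μ :=
  MemLp.of_bound hY.aestronglyMeasurable d⁻¹ (ae_of_all _ fun ω => by
    rcases hvals ω with h | h <;> simp [h, abs_of_pos hd, hd.le])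

lemma integral_eq_one_of_bernoulli (hd : 0 < d) (hY : Measurable Y)
    (hvals : ∀ ω, Y ω = d⁻¹ ∨ Y ω = 0) (hprob : μ {ω | Y ω = d⁻¹} = ENNReal.ofReal d) :
    μ[Y] = 1 := by
  have hA : MeasurableSet {ω | Y ω = d⁻¹} := hY (measurableSet_singleton _)
  rw [eq_indicator_of_bernoulli hd hvals, integral_indicator_const _ hA, measureReal_def, hprob,
    ENNReal.toReal_ofReal hd.le, smul_eq_mul, mul_inv_cancel₀ hd.ne']

lemma variance_eq_of_bernoulli [IsProbabilityMeasure μ] (hd : 0 < d) (hY : Measurable Y)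
    (hvals : ∀ ω, Y ω = d⁻¹ ∨ Y ω = 0) (hprob : μ {ω | Y ω = d⁻¹} = ENNReal.ofReal d) :
    Var[Y; μ] = d⁻¹ - 1 := by
  have hsq : Y ^ 2 = fun ω => d⁻¹ * Y ω := by
    ext ω
    rcases hvals ω with h | h <;> simp [h, sq]
  rw [variance_eq_sub (memLp_of_bernoulli hd hY hvals), hsq, integral_const_mul,
    integral_eq_one_of_bernoulli hd hY hvals hprob]
  ring

end Bernoulli

lemma ae_tendsto_zero_of_summable_integral_norm_sq {Ω E : Type*} [MeasurableSpace Ω]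
    {μ : Measure Ω} [NormedAddCommGroup E] {Z : ℕ → Ω → E} (hZ : ∀ N, MemLp (Z N) 2 μ)
    (hs : Summable fun N => ∫ ω, ‖Z N ω‖ ^ 2 ∂μ) :
    ∀ᵐ ω ∂μ, Tendsto (fun N => Z N ω) atTop (𝓝 0) := by
  have hint : ∀ N, Integrable (fun ω => ‖Z N ω‖ ^ 2) μ := fun N =>
    (hZ N).integrable_norm_pow two_ne_zero
  have hnorm : ∑' N, eLpNorm (fun ω => ‖Z N ω‖ ^ 2) 1 μ ≠ ∞ := by
    simp_rw [eLpNorm_one_eq_lintegral_enorm, ← ofReal_integral_norm_eq_lintegral_enorm (hint _),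
      norm_pow, norm_norm]
    rw [← ENNReal.ofReal_tsum_of_nonneg (fun N => integral_nonneg fun ω => by positivity) hs]
    exact ENNReal.ofReal_ne_top
  filter_upwards [summable_norm_of_tsum_eLpNorm_ne_top le_rfl
    (fun N => (hint N).aestronglyMeasurable) hnorm] with ω hω
  have hsq : Tendsto (fun N => ‖Z N ω‖ ^ 2) atTop (𝓝 0) := by
    simpa using hω.tendsto_atTop_zero
  have := (Real.continuous_sqrt.tendsto 0).comp hsq
  simp only [Function.comp_def, Real.sqrt_sq (norm_nonneg _), Real.sqrt_zero] at this
  exact tendsto_zero_iff_norm_tendsto_zero.mpr this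

instance : NullSingletonClass μ01 := by unfold μ01; infer_instance

lemma integrable_of_L2 (f : Lp ℂ 2 μ01) : Integrable (f : ℝ → ℂ) μ01 :=
  (Lp.memLp f).integrable one_le_two

lemma integrable_conj_of_L2 (f : Lp ℂ 2 μ01) :
    Integrable (fun x => conj ((f : ℝ → ℂ) x)) μ01 :=
  Complex.conjCLE.toContinuousLinearMap.integrable_comp (integrable_of_L2 f)

lemma restrict_μ01_of_subset {s : Set ℝ} (hs : MeasurableSet s) (h : s ⊆ Icc 0 1) :
    μ01.restrict s = volume.restrict s := by
  rw [μ01, Measure.restrict_restrict hs, inter_eq_left.mpr h]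

lemma integral_μ01_eq_intervalIntegral {E : Type*} [NormedAddCommGroup E] [NormedSpace ℝ E]
    (g : ℝ → E) :
    ∫ x, g x ∂μ01 = ∫ x in (0 : ℝ)..1, g x ∂μ01 := by
  rw [intervalIntegral.integral_of_le zero_le_one, ← integral_Icc_eq_integral_Ioc,
    restrict_μ01_of_subset measurableSet_Icc subset_rfl, μ01]

lemma sum_intervalIntegral_div {E : Type*} [NormedAddCommGroup E] [NormedSpace ℝ E]
    {μ : Measure ℝ} {g : ℝ → E} (hg : ∀ a b, IntervalIntegrable g μ a b) (N n : ℕ) :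
    ∑ k ∈ range n, ∫ x in (k / N : ℝ)..((k + 1) / N), g x ∂μ = ∫ x in (0 : ℝ)..(n / N), g x ∂μ := by
  have := intervalIntegral.sum_integral_adjacent_intervals (a := fun k : ℕ => (k / N : ℝ))
    (n := n) (fun k _ => hg _ _)
  simpa using this

lemma intervalIntegral_zero_one_eq_sum {E : Type*} [NormedAddCommGroup E] [NormedSpace ℝ E]
    {g : ℝ → E} (hg : Integrable g μ01) {N : ℕ} (hN : 0 < N) :
    ∫ x in (0 : ℝ)..1, g x ∂μ01 = ∑ i : Fin N, ∫ x in (i / N : ℝ)..((i + 1) / N), g x ∂μ01 := by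
  rw [Fin.sum_univ_eq_sum_range (fun k => ∫ x in (k / N : ℝ)..((k + 1) / N), g x ∂μ01),
    sum_intervalIntegral_div (fun a b => hg.intervalIntegrable), div_self (by positivity)]

lemma measureReal_Icc_inter_Icc (N : ℕ) (i j : Fin N) :
    μ01.real (Icc ((i : ℝ) / N) ((i + 1) / N) ∩ Icc ((j : ℝ) / N) ((j + 1) / N)) =
      if i = j then (N : ℝ)⁻¹ else 0 := by
  have hN : (0 : ℝ) < N := by exact_mod_cast i.pos
  split_ifs with hij
  · subst hij
    have hsub : Icc ((i : ℝ) / N) ((i + 1) / N) ⊆ Icc 0 1 :=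
      Icc_subset_Icc (by positivity) ((div_le_one hN).mpr (by exact_mod_cast i.isLt))
    rw [Set.inter_self, μ01, measureReal_restrict_apply measurableSet_Icc, inter_eq_left.mpr hsub,
      Real.volume_real_Icc_of_le (by gcongr; linarith)]
    field_simp
    ring
  · have hdisj : min ((i + 1 : ℝ) / N) ((j + 1) / N) ≤ max ((i : ℝ) / N) (j / N) := by
      rcases lt_or_gt_of_ne hij with h | h
      · have : (i : ℝ) + 1 ≤ j := by exact_mod_cast h
        exact (min_le_left _ _).trans
          ((div_le_div_of_nonneg_right this hN.le).trans (le_max_right _ _))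
      · have : (j : ℝ) + 1 ≤ i := by exact_mod_cast h
        exact (min_le_right _ _).trans
          ((div_le_div_of_nonneg_right this hN.le).trans (le_max_left _ _))
    have hnull : μ01 (Icc ((i : ℝ) / N) ((i + 1) / N) ∩ Icc ((j : ℝ) / N) ((j + 1) / N)) = 0 := by
      refine nonpos_iff_eq_zero.mp ((Measure.restrict_le_self (μ := volume) _).trans_eq ?_)
      rw [Icc_inter_Icc, Real.volume_Icc, ENNReal.ofReal_eq_zero]
      linarith
    rw [measureReal_def, hnull, ENNReal.toReal_zero]

lemma orthonormal_eN (N : ℕ) : Orthonormal ℂ (eN N) := by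
  rw [orthonormal_iff_ite]
  intro i j
  have hN : (0 : ℝ) < N := by exact_mod_cast i.pos
  rw [eN, eN, L2.inner_indicatorConstLp_indicatorConstLp, measureReal_Icc_inter_Icc]
  split_ifs
  · rw [RCLike.inner_apply', Complex.conj_ofReal, ← Complex.ofReal_mul,
      Real.mul_self_sqrt hN.le, Complex.real_smul, ← Complex.ofReal_mul, inv_mul_cancel₀ hN.ne',
      Complex.ofReal_one]
  · simp

lemma inner_eN_eq_integral (N : ℕ) (i : Fin N) (f : Lp ℂ 2 μ01) :
    ⟪eN N i, f⟫_ℂ = (Real.sqrt N : ℂ) * ∫ x in (i / N : ℝ)..((i + 1) / N), (f : ℝ → ℂ) x ∂μ01 := by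
  have hle : (i / N : ℝ) ≤ (i + 1) / N := by gcongr; linarith
  rw [eN, L2.inner_indicatorConstLp_eq_inner_setIntegral, integral_Icc_eq_integral_Ioc,
    ← intervalIntegral.integral_of_le hle, RCLike.inner_apply', Complex.conj_ofReal]

lemma inner_eN_right_eq_integral (N : ℕ) (i : Fin N) (f : Lp ℂ 2 μ01) :
    ⟪f, eN N i⟫_ℂ =
      (Real.sqrt N : ℂ) * ∫ x in (i / N : ℝ)..((i + 1) / N), conj ((f : ℝ → ℂ) x) ∂μ01 := by
  have hle : (i / N : ℝ) ≤ (i + 1) / N := by gcongr; linarith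
  rw [← inner_conj_symm, inner_eN_eq_integral, map_mul, Complex.conj_ofReal,
    intervalIntegral.integral_of_le hle, intervalIntegral.integral_of_le hle, integral_conj]

lemma inner_Wmap_matVec {N : ℕ} (M : Matrix (Fin N) (Fin N) ℂ) (u v : Lp ℂ 2 μ01) :
    ⟪v, Wmap N (matVec M (Wstar N u))⟫_ℂ =
      ∑ i, ∑ j, M i j * ⟪eN N j, u⟫_ℂ * ⟪v, eN N i⟫_ℂ := by
  simp only [Wmap, inner_sum, inner_smul_right, matVec, Wstar, Matrix.toLpLin_apply,
    Matrix.mulVec, dotProduct, Finset.sum_mul]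
  rfl

def primitive (f : Lp ℂ 2 μ01) (x : ℝ) : ℂ := ∫ t in (0 : ℝ)..x, (f : ℝ → ℂ) t ∂μ01

lemma continuous_primitive (f : Lp ℂ 2 μ01) : Continuous (primitive f) :=
  (integrable_of_L2 f).continuous_primitive 0

lemma norm_primitive_le (f : Lp ℂ 2 μ01) (x : ℝ) : ‖primitive f x‖ ≤ ∫ t, ‖(f : ℝ → ℂ) t‖ ∂μ01 :=
  intervalIntegral.norm_integral_le_integral_norm_uIoc.trans
    (setIntegral_le_integral (integrable_of_L2 f).norm (ae_of_all _ fun _ => norm_nonneg _))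

lemma norm_primitive_sub_le (f : Lp ℂ 2 μ01) {a b : ℝ} (hab : a ≤ b) :
    ‖primitive f b - primitive f a‖ ≤ Real.sqrt (b - a) * ‖f‖ := by
  have hint := fun x y => (integrable_of_L2 f).intervalIntegrable (a := x) (b := y)
  rw [primitive, primitive, intervalIntegral.integral_interval_sub_left (hint _ _) (hint _ _),
    intervalIntegral.integral_of_le hab,
    ← L2.inner_indicatorConstLp_one measurableSet_Ioc (measure_ne_top μ01 _)]
  refine (norm_inner_le_norm _ _).trans (mul_le_mul_of_nonneg_right ?_ (norm_nonneg f))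
  rw [norm_indicatorConstLp two_ne_zero ENNReal.ofNat_ne_top, norm_one, one_mul,
    ENNReal.toReal_ofNat, ← Real.sqrt_eq_rpow]
  refine Real.sqrt_le_sqrt ?_
  calc μ01.real (Ioc a b) ≤ volume.real (Ioc a b) :=
        ENNReal.toReal_mono (by simp) (Measure.restrict_le_self _)
    _ = b - a := by rw [Real.volume_real_Ioc_of_le hab]

lemma intervalIntegral_eq_primitive {f : Lp ℂ 2 μ01} {x : ℝ} (hx : x ∈ Icc (0 : ℝ) 1) :
    ∫ t in (0 : ℝ)..x, (f : ℝ → ℂ) t = primitive f x := by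
  rw [primitive, intervalIntegral.integral_of_le hx.1, intervalIntegral.integral_of_le hx.1,
    restrict_μ01_of_subset measurableSet_Ioc
      (Ioc_subset_Icc_self.trans (Icc_subset_Icc_right hx.2))]

lemma inner_eq_integral_conj_mul_primitive {V : Lp ℂ 2 μ01 → Lp ℂ 2 μ01} (hV : IsVolterra V)
    (u v : Lp ℂ 2 μ01) :
    ⟪v, V u⟫_ℂ = ∫ x in (0 : ℝ)..1, conj ((v : ℝ → ℂ) x) * primitive u x ∂μ01 := by
  rw [L2.inner_def, ← integral_μ01_eq_intervalIntegral]
  refine integral_congr_ae ?_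
  filter_upwards [hV u, ae_restrict_mem measurableSet_Icc] with x hVx hx
  rw [RCLike.inner_apply', hVx, intervalIntegral_eq_primitive hx]

lemma integrable_conj_mul_primitive (u v : Lp ℂ 2 μ01) :
    Integrable (fun x => conj ((v : ℝ → ℂ) x) * primitive u x) μ01 :=
  (integrable_conj_of_L2 v).mul_bdd (continuous_primitive u).aestronglyMeasurable
    (ae_of_all _ (norm_primitive_le u))

lemma sum_ite_le_eq_sum_range {N : ℕ} (i : Fin N) (J : ℕ → ℂ) :
    ∑ j : Fin N, (if j ≤ i then J j else 0) = ∑ k ∈ range (i + 1), J k := by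
  simp_rw [Fin.le_iff_val_le_val]
  rw [Fin.sum_univ_eq_sum_range (fun k => if k ≤ (i : ℕ) then J k else 0), ← sum_filter]
  congr 1
  ext k
  simp only [mem_filter, Finset.mem_range]
  have := i.isLt
  omega

lemma inner_TM_eq_sum (N : ℕ) (u v : Lp ℂ 2 μ01) :
    ⟪v, Wmap N (matVec (TM N) (Wstar N u))⟫_ℂ = ∑ i : Fin N,
      ∫ x in (i / N : ℝ)..((i + 1) / N), conj ((v : ℝ → ℂ) x) * primitive u ((i + 1) / N) ∂μ01 := by
  rw [inner_Wmap_matVec]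
  refine sum_congr rfl fun i _ => ?_
  have hN : (0 : ℝ) < N := by exact_mod_cast i.pos
  have hsqrt : (N : ℂ)⁻¹ * (Real.sqrt N : ℂ) * (Real.sqrt N : ℂ) = 1 := by
    rw [mul_assoc, ← Complex.ofReal_mul, Real.mul_self_sqrt hN.le, Complex.ofReal_natCast,
      inv_mul_cancel₀ (by exact_mod_cast hN.ne')]
  have hprim : ∑ k ∈ range (i + 1), ∫ x in (k / N : ℝ)..((k + 1) / N), (u : ℝ → ℂ) x ∂μ01 =
      primitive u ((i + 1) / N) := by
    rw [sum_intervalIntegral_div (fun a b => (integrable_of_L2 u).intervalIntegrable), primitive]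
    push_cast
    rfl
  set J : ℕ → ℂ := fun k => ∫ x in (k / N : ℝ)..((k + 1) / N), (u : ℝ → ℂ) x ∂μ01
  set K := ∫ x in (i / N : ℝ)..((i + 1) / N), conj ((v : ℝ → ℂ) x) ∂μ01
  calc ∑ j, TM N i j * ⟪eN N j, u⟫_ℂ * ⟪v, eN N i⟫_ℂ
      = ∑ j : Fin N, (if j ≤ i then J j else 0) * K := by
        refine sum_congr rfl fun j _ => ?_
        simp only [TM, Matrix.of_apply, inner_eN_eq_integral, inner_eN_right_eq_integral]
        split_ifs
        · linear_combination (J j * K) * hsqrt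
        · simp
    _ = primitive u ((i + 1) / N) * K := by rw [← sum_mul, sum_ite_le_eq_sum_range, hprim]
    _ = _ := by rw [intervalIntegral.integral_mul_const, mul_comm]

lemma norm_inner_TM_sub_inner_le {V : Lp ℂ 2 μ01 → Lp ℂ 2 μ01} (hV : IsVolterra V)
    (u v : Lp ℂ 2 μ01) {N : ℕ} (hN : 0 < N) :
    ‖⟪v, Wmap N (matVec (TM N) (Wstar N u))⟫_ℂ - ⟪v, V u⟫_ℂ‖ ≤
      Real.sqrt (1 / N) * ‖u‖ * ∫ x, ‖(v : ℝ → ℂ) x‖ ∂μ01 := by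
  set g : ℝ → ℝ := fun x => ‖(v : ℝ → ℂ) x‖ * (Real.sqrt (1 / N) * ‖u‖)
  have hg : Integrable g μ01 := (integrable_of_L2 v).norm.mul_const _
  have hpiece : ∀ i : Fin N,
      ‖(∫ x in (i / N : ℝ)..((i + 1) / N), conj ((v : ℝ → ℂ) x) * primitive u ((i + 1) / N) ∂μ01)
        - ∫ x in (i / N : ℝ)..((i + 1) / N), conj ((v : ℝ → ℂ) x) * primitive u x ∂μ01‖ ≤
      ∫ x in (i / N : ℝ)..((i + 1) / N), g x ∂μ01 := by
    intro i
    have hle : (i / N : ℝ) ≤ (i + 1) / N := by gcongr; linarith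
    rw [← intervalIntegral.integral_sub (((integrable_conj_of_L2 v).mul_const _).intervalIntegrable)
      (integrable_conj_mul_primitive u v).intervalIntegrable]
    refine intervalIntegral.norm_integral_le_of_norm_le hle (ae_of_all _ fun x hx => ?_)
      hg.intervalIntegrable
    rw [← mul_sub, norm_mul, RCLike.norm_conj]
    refine mul_le_mul_of_nonneg_left ((norm_primitive_sub_le u hx.2).trans ?_) (norm_nonneg _)
    refine mul_le_mul_of_nonneg_right (Real.sqrt_le_sqrt ?_) (norm_nonneg u)
    have : (i + 1 : ℝ) / N - i / N = 1 / N := by ring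
    linarith [hx.1]
  calc _ = ‖∑ i : Fin N,
        ((∫ x in (i / N : ℝ)..((i + 1) / N), conj ((v : ℝ → ℂ) x) * primitive u ((i + 1) / N) ∂μ01)
          - ∫ x in (i / N : ℝ)..((i + 1) / N), conj ((v : ℝ → ℂ) x) * primitive u x ∂μ01)‖ := by
        rw [inner_TM_eq_sum, inner_eq_integral_conj_mul_primitive hV,
          intervalIntegral_zero_one_eq_sum (integrable_conj_mul_primitive u v) hN, sum_sub_distrib]
    _ ≤ ∑ i : Fin N, ∫ x in (i / N : ℝ)..((i + 1) / N), g x ∂μ01 :=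
        (norm_sum_le _ _).trans (sum_le_sum fun i _ => hpiece i)
    _ = Real.sqrt (1 / N) * ‖u‖ * ∫ x, ‖(v : ℝ → ℂ) x‖ ∂μ01 := by
        rw [← intervalIntegral_zero_one_eq_sum hg hN, ← integral_μ01_eq_intervalIntegral,
          integral_mul_const, mul_comm]

lemma tendsto_inner_TM {V : Lp ℂ 2 μ01 → Lp ℂ 2 μ01} (hV : IsVolterra V) (u v : Lp ℂ 2 μ01) :
    Tendsto (fun N => ⟪v, Wmap N (matVec (TM N) (Wstar N u))⟫_ℂ) atTop (𝓝 ⟪v, V u⟫_ℂ) := by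
  rw [← tendsto_sub_nhds_zero_iff]
  have hsqrt : Tendsto (fun N : ℕ => Real.sqrt (1 / N)) atTop (𝓝 0) := by
    have := (Real.continuous_sqrt.tendsto 0).comp tendsto_one_div_atTop_nhds_zero_nat
    rwa [Real.sqrt_zero] at this
  have hbound := (hsqrt.mul_const ‖u‖).mul_const (∫ x, ‖(v : ℝ → ℂ) x‖ ∂μ01)
  rw [zero_mul, zero_mul] at hbound
  refine squeeze_zero_norm' ?_ hbound
  filter_upwards [eventually_gt_atTop 0] with N hN
  exact norm_inner_TM_sub_inner_le hV u v hN

def lowerTri (N : ℕ) : Finset (Fin N × Fin N) := univ.filter fun p => p.2 ≤ p.1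

lemma mem_lowerTri {N : ℕ} {p : Fin N × Fin N} : p ∈ lowerTri N ↔ p.2 ≤ p.1 := by simp [lowerTri]

def fluctCoeff (N : ℕ) (u v : Lp ℂ 2 μ01) (p : Fin N × Fin N) : ℂ :=
  (N : ℂ)⁻¹ * ⟪eN N p.2, u⟫_ℂ * ⟪v, eN N p.1⟫_ℂ

def fluctuation {Ω : Type*} (N : ℕ) (X : Fin N → Fin N → Ω → ℝ) (u v : Lp ℂ 2 μ01) (ω : Ω) :
    ℂ :=
  ∑ p ∈ lowerTri N, fluctCoeff N u v p * ((X p.1 p.2 ω - 1 : ℝ) : ℂ)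

lemma inner_XM_eq_inner_TM_add {Ω : Type*} {N : ℕ} (X : Fin N → Fin N → Ω → ℝ) (ω : Ω)
    (hzero : ∀ i j, i < j → X i j ω = 0) (u v : Lp ℂ 2 μ01) :
    ⟪v, Wmap N (matVec (XM N X ω) (Wstar N u))⟫_ℂ =
      ⟪v, Wmap N (matVec (TM N) (Wstar N u))⟫_ℂ + fluctuation N X u v ω := by
  rw [inner_Wmap_matVec, inner_Wmap_matVec, fluctuation, lowerTri, sum_filter,
    Fintype.sum_prod_type, ← sum_add_distrib]
  refine sum_congr rfl fun i _ => ?_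
  rw [← sum_add_distrib]
  refine sum_congr rfl fun j _ => ?_
  by_cases h : j ≤ i
  · simp only [XM, TM, fluctCoeff, Matrix.of_apply, if_pos h]
    push_cast
    ring
  · simp [XM, TM, h, hzero i j (lt_of_not_ge h)]

lemma sum_norm_sq_fluctCoeff_le (N : ℕ) (u v : Lp ℂ 2 μ01) :
    ∑ p, ‖fluctCoeff N u v p‖ ^ 2 ≤ ‖u‖ ^ 2 * ‖v‖ ^ 2 / N ^ 2 := by
  have hbessel := fun f : Lp ℂ 2 μ01 => (orthonormal_eN N).sum_inner_products_le (s := univ) f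
  calc ∑ p, ‖fluctCoeff N u v p‖ ^ 2
      = (∑ j, ‖⟪eN N j, u⟫_ℂ‖ ^ 2) * (∑ i, ‖⟪eN N i, v⟫_ℂ‖ ^ 2) / N ^ 2 := by
        rw [Fintype.sum_prod_type, sum_comm, sum_mul_sum, sum_div]
        refine sum_congr rfl fun j _ => ?_
        rw [sum_div]
        refine sum_congr rfl fun i _ => ?_
        rw [fluctCoeff, norm_mul, norm_mul, norm_inv, Complex.norm_natCast, norm_inner_symm v]
        ring
    _ ≤ ‖u‖ ^ 2 * ‖v‖ ^ 2 / N ^ 2 := by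
        gcongr
        exacts [hbessel u, hbessel v]

section Fluctuation

variable {Ω : Type*} [MeasurableSpace Ω] {μ : Measure Ω} {N : ℕ} {X : Fin N → Fin N → Ω → ℝ}
  {d : ℝ}

lemma memLp_fluctuation [IsFiniteMeasure μ] (hd : 0 < d) (hmeas : ∀ i j, Measurable (X i j))
    (hvals : ∀ i j, j ≤ i → ∀ ω, X i j ω = d⁻¹ ∨ X i j ω = 0) (u v : Lp ℂ 2 μ01) :
    MemLp (fluctuation N X u v) 2 μ :=
  memLp_finsetSum _ fun p hp => (((memLp_of_bernoulli hd (hmeas p.1 p.2)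
    (hvals p.1 p.2 (mem_lowerTri.mp hp))).sub (memLp_const 1)).ofReal).const_mul _

lemma integral_norm_sq_fluctuation_le [IsProbabilityMeasure μ] (hd : 0 < d)
    (hmeas : ∀ i j, Measurable (X i j)) (hindep : iIndepFun (fun p : LTri N => X p.1.1 p.1.2) μ)
    (hvals : ∀ i j, j ≤ i → ∀ ω, X i j ω = d⁻¹ ∨ X i j ω = 0)
    (hprob : ∀ i j, j ≤ i → μ {ω | X i j ω = d⁻¹} = ENNReal.ofReal d) (u v : Lp ℂ 2 μ01) :
    ∫ ω, ‖fluctuation N X u v ω‖ ^ 2 ∂μ ≤ d⁻¹ * (‖u‖ ^ 2 * ‖v‖ ^ 2 / N ^ 2) := by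
  have hmean : ∀ p ∈ lowerTri N, μ[X p.1 p.2] = 1 := fun p hp =>
    integral_eq_one_of_bernoulli hd (hmeas _ _) (hvals _ _ (mem_lowerTri.mp hp))
      (hprob _ _ (mem_lowerTri.mp hp))
  have hvar : ∀ p ∈ lowerTri N, Var[X p.1 p.2; μ] ≤ d⁻¹ := fun p hp => by
    rw [variance_eq_of_bernoulli hd (hmeas _ _) (hvals _ _ (mem_lowerTri.mp hp))
      (hprob _ _ (mem_lowerTri.mp hp))]
    linarith
  have hind : Set.Pairwise ↑(lowerTri N) fun p q : Fin N × Fin N => X p.1 p.2 ⟂ᵢ[μ] X q.1 q.2 :=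
    fun p hp q hq hpq => hindep.indepFun (i := ⟨p, mem_lowerTri.mp hp⟩)
      (j := ⟨q, mem_lowerTri.mp hq⟩) fun h => hpq (congrArg Subtype.val h)
  have hcentered : fluctuation N X u v = fun ω => ∑ p ∈ lowerTri N,
      fluctCoeff N u v p * ((X p.1 p.2 ω - μ[X p.1 p.2] : ℝ) : ℂ) := by
    ext ω
    exact sum_congr rfl fun p hp => by rw [hmean p hp]
  rw [hcentered, integral_norm_sq_sum_mul_sub_integral (X := fun p => X p.1 p.2) (fun p hp =>
    memLp_of_bernoulli hd (hmeas _ _) (hvals _ _ (mem_lowerTri.mp hp))) hind]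
  calc ∑ p ∈ lowerTri N, ‖fluctCoeff N u v p‖ ^ 2 * Var[X p.1 p.2; μ]
      ≤ ∑ p ∈ lowerTri N, ‖fluctCoeff N u v p‖ ^ 2 * d⁻¹ :=
        sum_le_sum fun p hp => mul_le_mul_of_nonneg_left (hvar p hp) (by positivity)
    _ ≤ ∑ p, ‖fluctCoeff N u v p‖ ^ 2 * d⁻¹ :=
        sum_le_sum_of_subset_of_nonneg (subset_univ _) fun p _ _ => by positivity
    _ ≤ d⁻¹ * (‖u‖ ^ 2 * ‖v‖ ^ 2 / N ^ 2) := by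
        rw [← sum_mul, mul_comm]
        exact mul_le_mul_of_nonneg_left (sum_norm_sq_fluctCoeff_le N u v) (by positivity)

end Fluctuation

end SparseBernoulli

open SparseBernoulli Topology

theorem wot_like_convergence_sparse_bernoulli_general
    {Ω : Type*} [MeasureSpace Ω] [IsProbabilityMeasure (ℙ : Measure Ω)]
    (X : (N : ℕ) → Fin N → Fin N → Ω → ℝ)
    (δ : ℕ → ℝ)
    (c : ℝ) (hc : 0 < c) (hlb : ∀ N, c ≤ δ N)
    (hmeas : ∀ N (i j : Fin N), Measurable (X N i j))
    (hzero : ∀ N (i j : Fin N), i < j → ∀ ω, X N i j ω = 0)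
    (hindep : ∀ N, iIndepFun
      (fun p : LTri N => X N p.1.1 p.1.2) ℙ)
    (hvals : ∀ N (i j : Fin N), j ≤ i → ∀ ω, X N i j ω = (δ N)⁻¹ ∨ X N i j ω = 0)
    (hprob : ∀ N (i j : Fin N), j ≤ i →
      ℙ {ω | X N i j ω = (δ N)⁻¹} = ENNReal.ofReal (δ N))
    (V : Lp ℂ 2 μ01 → Lp ℂ 2 μ01) (hV : IsVolterra V)
    (u v : Lp ℂ 2 μ01) :
    ∀ᵐ ω ∂ℙ, Tendsto
      (fun N => (@inner ℂ _ _ v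
        (Wmap N (matVec (XM N (X N) ω) (Wstar N u))) : ℂ))
      atTop (nhds (@inner ℂ _ _ v (V u))) := by
  have hδ : ∀ N, 0 < δ N := fun N => hc.trans_le (hlb N)
  have hsummable : Summable fun N : ℕ => c⁻¹ * (‖u‖ ^ 2 * ‖v‖ ^ 2) * ((N : ℝ) ^ 2)⁻¹ :=
    (Real.summable_nat_pow_inv.mpr one_lt_two).mul_left _
  have hfluct : ∀ᵐ ω, Tendsto (fun N => fluctuation N (X N) u v ω) atTop (𝓝 0) := by
    refine ae_tendsto_zero_of_summable_integral_norm_sq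
      (fun N => memLp_fluctuation (hδ N) (hmeas N) (hvals N) u v) ?_
    refine hsummable.of_nonneg_of_le (fun N => integral_nonneg fun ω => by positivity) fun N =>
      (integral_norm_sq_fluctuation_le (hδ N) (hmeas N) (hindep N) (hvals N) (hprob N) u v).trans ?_
    rw [mul_div_assoc', div_eq_mul_inv]
    gcongr
    exact hlb N
  filter_upwards [hfluct] with ω hω
  have hsum := (tendsto_inner_TM hV u v).add hω
  rw [add_zero] at hsum
  exact hsum.congr fun N =>
    (inner_XM_eq_inner_TM_add (X N) ω (fun i j h => hzero N i j h ω) u v).symm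

/-- **Sparse Bernoulli example, bounded-below case.** Let the (unscaled)
lower-triangular entries `X_{i,j}^N` be i.i.d., equal to `1/δ(N)` with
probability `δ(N)` and `0` otherwise (so the entries of `X_N = (1/N)(X_{i,j}^N)`
equal `1/(δ(N)N)` with probability `δ(N)`; the mean is `μ_N = 1` and the
variance is `σ_N² = (1-δ(N))/δ(N)`). If `δ(N)` is bounded below by a positive
constant, then for all `u, v ∈ L²[0,1]`, almost surely
`⟨W_N X_N W_N^*(u), v⟩ → ⟨V(u), v⟩`. -/
theorem wot_like_convergence_sparse_bernoulli
    {Ω : Type*} [MeasureSpace Ω] [IsProbabilityMeasure (ℙ : Measure Ω)]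
    (X : (N : ℕ) → Fin N → Fin N → Ω → ℝ)
    (δ : ℕ → ℝ) (hδ : ∀ N, δ N ∈ Set.Ioc (0 : ℝ) 1)
    (c : ℝ) (hc : 0 < c) (hlb : ∀ N, c ≤ δ N)
    (hmeas : ∀ N (i j : Fin N), Measurable (X N i j))
    (hzero : ∀ N (i j : Fin N), i < j → ∀ ω, X N i j ω = 0)
    (hindep : ∀ N, iIndepFun
      (fun p : LTri N => X N p.1.1 p.1.2) ℙ)
    (hvals : ∀ N (i j : Fin N), j ≤ i → ∀ ω, X N i j ω = (δ N)⁻¹ ∨ X N i j ω = 0)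
    (hprob : ∀ N (i j : Fin N), j ≤ i →
      ℙ {ω | X N i j ω = (δ N)⁻¹} = ENNReal.ofReal (δ N))
    (V : Lp ℂ 2 μ01 → Lp ℂ 2 μ01) (hV : IsVolterra V)
    (u v : Lp ℂ 2 μ01) :
    ∀ᵐ ω ∂ℙ, Tendsto
      (fun N => (@inner ℂ _ _ v
        (Wmap N (matVec (XM N (X N) ω) (Wstar N u))) : ℂ))
      atTop (nhds (@inner ℂ _ _ v (V u))) :=
  wot_like_convergence_sparse_bernoulli_general X δ c hc hlb hmeas hzero hindep hvals hprob V hV u v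

end
end

section
/- Suppose the entries $X_{i,j}^N$ for $1 \le j \le i \le N$ are i.i.d. random variables, whose common distribution does not depend on $N$ and has finite moments of all orders. Then for every $n \ge 1$, $E\big[\mathrm{tr}\big((X_N^* X_N)^n\big)\big] \to 0$ as $N \to \infty$, where $\mathrm{tr} = \frac{1}{N}\mathrm{Tr}$ is the normalized trace. -/
open MeasureTheory ProbabilityTheory Filter Matrix

noncomputable section

/-!
Since `Aᵀ A` is positive semidefinite, `tr((Aᵀ A)^n) ≤ tr(Aᵀ A)^n = (∑ᵢⱼ Aᵢⱼ²)^n`, and by Jensen's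
inequality the right side is at most `(N²)^(n-1) ∑ᵢⱼ Aᵢⱼ^(2n)`. For `A = X_N` every entry has
`2n`-th moment at most `N^(-2n) E[ξ^(2n)]`, so `E[Tr((X_Nᵀ X_N)^n)] ≤ E[ξ^(2n)]` and the normalized
trace is `O(1/N)`.
-/

namespace Matrix

variable {m n 𝕜 : Type*} [Fintype m] [Fintype n] [RCLike 𝕜]

lemma trace_transpose_mul_self (A : Matrix m n ℝ) : (Aᵀ * A).trace = ∑ i, ∑ j, A i j ^ 2 := by
  simp only [trace, diag, mul_apply, transpose_apply, sq]
  exact Finset.sum_comm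

variable [DecidableEq n]

lemma IsHermitian.trace_pow_eq_sum_eigenvalues_pow {A : Matrix n n 𝕜} (hA : A.IsHermitian)
    (k : ℕ) : (A ^ k).trace = ∑ i, (hA.eigenvalues i : 𝕜) ^ k := by
  conv_lhs => rw [hA.spectral_theorem, ← map_pow, Unitary.conjStarAlgAut_apply, trace_mul_cycle,
    Unitary.coe_star_mul_self, one_mul, diagonal_pow, trace_diagonal]
  simp

open scoped ComplexOrder in
lemma PosSemidef.trace_pow_le {A : Matrix n n 𝕜} (hA : A.PosSemidef) {k : ℕ} (hk : k ≠ 0) :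
    (A ^ k).trace ≤ A.trace ^ k := by
  obtain ⟨k, rfl⟩ := Nat.exists_eq_add_one_of_ne_zero hk
  set ev := hA.isHermitian.eigenvalues
  have hev : ∀ i, 0 ≤ ev i := hA.eigenvalues_nonneg
  rw [hA.isHermitian.trace_pow_eq_sum_eigenvalues_pow, hA.isHermitian.trace_eq_sum_eigenvalues]
  norm_cast
  calc ∑ i, ev i ^ (k + 1) = ∑ i, ev i ^ k * ev i := by simp only [pow_succ]
    _ ≤ ∑ i, (∑ j, ev j) ^ k * ev i := Finset.sum_le_sum fun i _ =>
        mul_le_mul_of_nonneg_right (pow_le_pow_left₀ (hev i)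
          (Finset.single_le_sum (fun j _ => hev j) (Finset.mem_univ i)) k) (hev i)
    _ = (∑ i, ev i) ^ (k + 1) := by rw [← Finset.mul_sum, pow_succ]

lemma abs_trace_transpose_mul_self_pow_le (A : Matrix m n ℝ) (k : ℕ) :
    |((Aᵀ * A) ^ (k + 1)).trace| ≤
      ((Fintype.card m : ℝ) * Fintype.card n) ^ k * ∑ i, ∑ j, A i j ^ (2 * (k + 1)) := by
  have hpsd : (Aᵀ * A).PosSemidef := by
    simpa using posSemidef_conjTranspose_mul_self A
  have jensen := pow_sum_le_card_mul_sum_pow (s := Finset.univ)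
    (f := fun p : m × n => A p.1 p.2 ^ 2) (fun _ _ => sq_nonneg _) k
  simp only [Finset.card_univ, Fintype.card_prod, Nat.cast_mul, ← pow_mul,
    Fintype.sum_prod_type] at jensen
  rw [← trace_transpose_mul_self A] at jensen
  rw [abs_of_nonneg (hpsd.pow _).trace_nonneg]
  exact (hpsd.trace_pow_le k.succ_ne_zero).trans jensen

end Matrix

section RandomMatrix

variable {Ω : Type*} [MeasurableSpace Ω] {μ : Measure Ω}

theorem norm_integral_trace_transpose_mul_self_pow_le {m n : Type*} [Fintype m] [Fintype n]
    [DecidableEq n] (A : Ω → Matrix m n ℝ) {k : ℕ} (hk : k ≠ 0) {c : ℝ}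
    (hint : ∀ i j, Integrable (fun ω => A ω i j ^ (2 * k)) μ)
    (hle : ∀ i j, ∫ ω, A ω i j ^ (2 * k) ∂μ ≤ c) :
    ‖∫ ω, (((A ω)ᵀ * A ω) ^ k).trace ∂μ‖ ≤
      ((Fintype.card m : ℝ) * Fintype.card n) ^ k * c := by
  obtain ⟨k, rfl⟩ := Nat.exists_eq_add_one_of_ne_zero hk
  set M : ℝ := (Fintype.card m : ℝ) * Fintype.card n
  have hsum : Integrable (fun ω => ∑ i, ∑ j, A ω i j ^ (2 * (k + 1))) μ :=
    integrable_finsetSum _ fun i _ => integrable_finsetSum _ fun j _ => hint i j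
  calc ‖∫ ω, (((A ω)ᵀ * A ω) ^ (k + 1)).trace ∂μ‖
      ≤ ∫ ω, M ^ k * ∑ i, ∑ j, A ω i j ^ (2 * (k + 1)) ∂μ :=
        norm_integral_le_of_norm_le (hsum.const_mul _)
          (.of_forall fun ω => abs_trace_transpose_mul_self_pow_le (A ω) k)
    _ = M ^ k * ∑ i, ∑ j, ∫ ω, A ω i j ^ (2 * (k + 1)) ∂μ := by
        rw [integral_const_mul, integral_finsetSum _ fun i _ =>
          integrable_finsetSum _ fun j _ => hint i j]
        simp_rw [integral_finsetSum _ fun j _ => hint _ j]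
    _ ≤ M ^ k * ∑ _i : m, ∑ _j : n, c := by gcongr with i _ j; exact hle i j
    _ = M ^ (k + 1) * c := by
        simp only [Finset.sum_const, Finset.card_univ, nsmul_eq_mul, M]
        ring

variable {N : ℕ} {X : Fin N → Fin N → Ω → ℝ} {ξ : Ω → ℝ}

lemma integrable_entry_pow (hzero : ∀ i j, i < j → ∀ ω, X i j ω = 0)
    (hident : ∀ i j, j ≤ i → IdentDistrib (X i j) ξ μ μ) {p : ℕ} (hp : p ≠ 0)
    (hξ : Integrable (fun ω => ξ ω ^ p) μ) (i j : Fin N) :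
    Integrable (fun ω => X i j ω ^ p) μ := by
  rcases le_or_gt j i with hji | hij
  · exact ((hident i j hji).comp (measurable_id.pow_const p)).integrable_iff.2 hξ
  · simp [hzero i j hij, hp]

lemma integral_entry_pow_le (hzero : ∀ i j, i < j → ∀ ω, X i j ω = 0)
    (hident : ∀ i j, j ≤ i → IdentDistrib (X i j) ξ μ μ) {k : ℕ} (hk : k ≠ 0) (i j : Fin N) :
    ∫ ω, X i j ω ^ (2 * k) ∂μ ≤ ∫ ω, ξ ω ^ (2 * k) ∂μ := by
  rcases le_or_gt j i with hji | hij
  · exact ((hident i j hji).comp (measurable_id.pow_const _)).integral_eq.le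
  · simp only [hzero i j hij, zero_pow (mul_ne_zero two_ne_zero hk), integral_zero]
    exact integral_nonneg fun ω => (even_two_mul k).pow_nonneg _

end RandomMatrix

theorem expected_normalized_trace_tendsto_zero_general
    {Ω : Type*} [MeasureSpace Ω] [IsProbabilityMeasure (ℙ : Measure Ω)]
    (X : (N : ℕ) → Fin N → Fin N → Ω → ℝ)
    (ξ : Ω → ℝ)
    (hzero : ∀ N (i j : Fin N), i < j → ∀ ω, X N i j ω = 0)
    (hident : ∀ N (i j : Fin N), j ≤ i → IdentDistrib (X N i j) ξ ℙ ℙ)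
    (hmom : ∀ p : ℕ, MemLp ξ p ℙ) :
    ∀ n : ℕ, 1 ≤ n →
      Tendsto
        (fun N : ℕ => ∫ ω, (1 / (N : ℝ)) *
          Matrix.trace (((XMr N (X N) ω)ᵀ * XMr N (X N) ω) ^ n) ∂ℙ)
        atTop (nhds 0) := by
  intro n hn
  have hn0 : n ≠ 0 := Nat.one_le_iff_ne_zero.1 hn
  set C := ∫ ω, ξ ω ^ (2 * n) ∂ℙ
  have hξ : Integrable (fun ω => ξ ω ^ (2 * n)) ℙ := by
    simpa only [Real.norm_eq_abs, (even_two_mul n).pow_abs] using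
      (hmom (2 * n)).integrable_norm_pow (by omega)
  refine squeeze_zero_norm' ?_ (tendsto_const_div_atTop_nhds_zero_nat C)
  filter_upwards [eventually_ne_atTop 0] with N hN
  have hentry (i j : Fin N) : (fun ω => XMr N (X N) ω i j ^ (2 * n)) =
      fun ω => (N : ℝ)⁻¹ ^ (2 * n) * X N i j ω ^ (2 * n) := by
    simp only [XMr, of_apply, mul_pow]
  have htrace : ‖∫ ω, (((XMr N (X N) ω)ᵀ * XMr N (X N) ω) ^ n).trace ∂ℙ‖ ≤ C := by
    refine (norm_integral_trace_transpose_mul_self_pow_le _ hn0 (c := (N : ℝ)⁻¹ ^ (2 * n) * C)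
      (fun i j => ?_) (fun i j => ?_)).trans_eq ?_
    · rw [hentry]
      exact (integrable_entry_pow (hzero N) (hident N) (by omega) hξ i j).const_mul _
    · rw [hentry, integral_const_mul]
      gcongr
      exact integral_entry_pow_le (hzero N) (hident N) hn0 i j
    · have hN1 : (N : ℝ) * N * (N : ℝ)⁻¹ ^ 2 = 1 := by field_simp
      rw [Fintype.card_fin, pow_mul, ← mul_assoc, ← mul_pow, hN1, one_pow, one_mul]
  rw [integral_const_mul, norm_mul, norm_div, norm_one, RCLike.norm_natCast, one_div_mul_eq_div]
  exact div_le_div_of_nonneg_right htrace (Nat.cast_nonneg N)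

/-- **Lemma 4.4 of the paper.** If the lower-triangular entries `X_{i,j}^N` are
i.i.d. with a common distribution not depending on `N` and having finite moments
of all orders, then for every `n ≥ 1`,
`E[tr((X_N^* X_N)^n)] → 0`, where `tr = (1/N)·Tr`. -/
theorem expected_normalized_trace_tendsto_zero
    {Ω : Type*} [MeasureSpace Ω] [IsProbabilityMeasure (ℙ : Measure Ω)]
    (X : (N : ℕ) → Fin N → Fin N → Ω → ℝ)
    (ξ : Ω → ℝ) (hξmeas : Measurable ξ)
    (hmeas : ∀ N (i j : Fin N), Measurable (X N i j))
    (hzero : ∀ N (i j : Fin N), i < j → ∀ ω, X N i j ω = 0)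
    (hindep : ∀ N, iIndepFun
      (fun p : LTri N => X N p.1.1 p.1.2) ℙ)
    (hident : ∀ N (i j : Fin N), j ≤ i → IdentDistrib (X N i j) ξ ℙ ℙ)
    (hmom : ∀ p : ℕ, MemLp ξ p ℙ) :
    ∀ n : ℕ, 1 ≤ n →
      Tendsto
        (fun N : ℕ => ∫ ω, (1 / (N : ℝ)) *
          Matrix.trace (((XMr N (X N) ω)ᵀ * XMr N (X N) ω) ^ n) ∂ℙ)
        atTop (nhds 0) :=
  expected_normalized_trace_tendsto_zero_general X ξ hzero hident hmom
end
end

section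
/- Suppose the entries $X_{i,j}^N$ for $1 \le j \le i \le N$ are i.i.d. random variables, whose common distribution does not depend on $N$, has finite moments of all orders, and has mean $\mu \ne 0$. Then for every $n \ge 2$, $E\big[\mathrm{tr}\big((N\, X_N^* X_N)^n\big)\big] \to \infty$ as $N \to \infty$, where $\mathrm{tr} = \frac{1}{N}\mathrm{Tr}$ is the normalized trace. -/
open MeasureTheory ProbabilityTheory Filter Matrix

noncomputable section

/-!
Put `M = N X_Nᵀ X_N` and let `𝟙` be the all-ones vector. In an eigenbasis of `M`,
`𝟙ᵀ M 𝟙 ≤ λ_max ‖𝟙‖² = N λ_max` and `λ_max ^ n ≤ Tr (M ^ n)`; since `𝟙ᵀ M 𝟙 = N ‖X_N 𝟙‖²`, this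
gives `‖X_N 𝟙‖ ^ (2n) ≤ Tr (M ^ n)` pointwise. By Jensen, `E ‖X_N 𝟙‖ ^ (2n) ≥ (E ‖X_N 𝟙‖²) ^ n`,
and `E ‖X_N 𝟙‖² ≥ ‖E[X_N] 𝟙‖² ≥ μ² N / 3` because the `k`-th row of `E[X_N]` has `k + 1` entries
equal to `μ / N`. Hence `E[tr (M ^ n)] ≥ (μ² N / 3) ^ n / N`, which tends to infinity for `n ≥ 2`.
Finite moments of all orders make every polynomial in the entries integrable.
-/

open scoped ENNReal

namespace Matrix

variable {m n : Type*} [Fintype m] [Fintype n] [DecidableEq n]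

theorem IsHermitian.pow_eq_conj {M : Matrix n n ℝ} (hM : M.IsHermitian) (k : ℕ) :
    M ^ k = (hM.eigenvectorUnitary : Matrix n n ℝ) * diagonal (hM.eigenvalues ^ k) *
      (hM.eigenvectorUnitary : Matrix n n ℝ)ᵀ := by
  conv_lhs => rw [hM.spectral_theorem]
  rw [← map_pow, diagonal_pow, Unitary.conjStarAlgAut_apply]
  rfl

theorem dotProduct_mulVec_conj_diagonal (U : unitaryGroup n ℝ) (d v : n → ℝ) :
    v ⬝ᵥ ((U : Matrix n n ℝ) * diagonal d * (U : Matrix n n ℝ)ᵀ) *ᵥ v =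
      ∑ i, d i * ((U : Matrix n n ℝ)ᵀ *ᵥ v) i ^ 2 := by
  rw [← mulVec_mulVec, ← mulVec_mulVec, dotProduct_mulVec, ← mulVec_transpose]
  simp only [dotProduct, mulVec_diagonal]
  exact Finset.sum_congr rfl fun i _ => by ring

theorem dotProduct_self_transpose_mulVec (U : unitaryGroup n ℝ) (v : n → ℝ) :
    ((U : Matrix n n ℝ)ᵀ *ᵥ v) ⬝ᵥ ((U : Matrix n n ℝ)ᵀ *ᵥ v) = v ⬝ᵥ v := by
  have hU : (U : Matrix n n ℝ) * (U : Matrix n n ℝ)ᵀ = 1 := Unitary.coe_mul_star_self U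
  rw [dotProduct_mulVec, vecMul_transpose, mulVec_mulVec, hU, one_mulVec]

theorem trace_conj_diagonal (U : unitaryGroup n ℝ) (d : n → ℝ) :
    ((U : Matrix n n ℝ) * diagonal d * (U : Matrix n n ℝ)ᵀ).trace = ∑ i, d i := by
  have hU : (U : Matrix n n ℝ)ᵀ * (U : Matrix n n ℝ) = 1 := Unitary.coe_star_mul_self U
  rw [trace_mul_comm, ← mul_assoc, hU, one_mul, trace_diagonal]

theorem PosSemidef.dotProduct_mulVec_pow_le [Nonempty n] {M : Matrix n n ℝ}
    (hM : M.PosSemidef) (v : n → ℝ) (k : ℕ) :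
    (v ⬝ᵥ M *ᵥ v) ^ k ≤ (v ⬝ᵥ v) ^ k * (M ^ k).trace := by
  set U := hM.1.eigenvectorUnitary
  set ev := hM.1.eigenvalues
  obtain ⟨i₀, -, hi₀⟩ := Finset.univ.exists_max_image ev Finset.univ_nonempty
  have hquad : v ⬝ᵥ M *ᵥ v ≤ ev i₀ * (v ⬝ᵥ v) := by
    rw [← pow_one M, hM.1.pow_eq_conj, dotProduct_mulVec_conj_diagonal,
      ← dotProduct_self_transpose_mulVec U v, dotProduct, Finset.mul_sum]
    refine Finset.sum_le_sum fun i _ => ?_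
    rw [pow_one, sq]
    exact mul_le_mul_of_nonneg_right (hi₀ i (Finset.mem_univ i)) (mul_self_nonneg _)
  have htrace : ev i₀ ^ k ≤ (M ^ k).trace := by
    rw [hM.1.pow_eq_conj, trace_conj_diagonal]
    exact Finset.single_le_sum (f := ev ^ k)
      (fun i _ => pow_nonneg (hM.eigenvalues_nonneg i) k) (Finset.mem_univ i₀)
  calc (v ⬝ᵥ M *ᵥ v) ^ k ≤ (ev i₀ * (v ⬝ᵥ v)) ^ k :=
        pow_le_pow_left₀ (hM.dotProduct_mulVec_nonneg v) hquad k
    _ ≤ (v ⬝ᵥ v) ^ k * (M ^ k).trace := by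
        rw [mul_pow, mul_comm]
        exact mul_le_mul_of_nonneg_left htrace (pow_nonneg (dotProduct_self_star_nonneg v) k)

theorem dotProduct_self_mulVec_one_pow_le_trace [Nonempty n] (A : Matrix m n ℝ) (k : ℕ) :
    ((A *ᵥ 1) ⬝ᵥ (A *ᵥ 1)) ^ k ≤ (((Fintype.card n : ℝ) • (Aᵀ * A)) ^ k).trace := by
  have hpsd : ((Fintype.card n : ℝ) • (Aᵀ * A)).PosSemidef := by
    simpa [conjTranspose_eq_transpose_of_trivial] using
      (posSemidef_conjTranspose_mul_self A).smul (Nat.cast_nonneg (α := ℝ) (Fintype.card n))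
  have h := hpsd.dotProduct_mulVec_pow_le 1 k
  rw [smul_mulVec, dotProduct_smul, ← mulVec_mulVec, dotProduct_mulVec, vecMul_transpose,
    one_dotProduct_one, smul_eq_mul, mul_pow] at h
  exact le_of_mul_le_mul_left h (by positivity)

end Matrix

theorem ENNReal.holderTriple_two_mul_natCast (p : ℕ) :
    ENNReal.HolderTriple ((2 * p : ℕ) : ℝ≥0∞) ((2 * p : ℕ) : ℝ≥0∞) (p : ℝ≥0∞) := by
  refine ⟨?_⟩
  rw [Nat.cast_mul, Nat.cast_ofNat, ENNReal.mul_inv (by simp) (by simp), ← add_mul,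
    ENNReal.inv_two_add_inv_two, one_mul]

namespace MeasureTheory

variable {Ω : Type*} [MeasurableSpace Ω]

def finiteMomentsSubalgebra (P : Measure Ω) [IsFiniteMeasure P] : Subalgebra ℝ (Ω → ℝ) where
  carrier := {f | ∀ p : ℕ, MemLp f p P}
  mul_mem' hf hg p :=
    (hg (2 * p)).mul (hf (2 * p)) (hpqr := ENNReal.holderTriple_two_mul_natCast p)
  add_mem' hf hg p := (hf p).add (hg p)
  algebraMap_mem' c _ := memLp_const c

variable {P : Measure Ω} [IsFiniteMeasure P] {f : Ω → ℝ}

theorem Integrable.of_mem_finiteMomentsSubalgebra (hf : f ∈ finiteMomentsSubalgebra P) :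
    Integrable f P :=
  memLp_one_iff_integrable.1 (by exact_mod_cast hf 1)

end MeasureTheory

namespace Subalgebra

variable {R Ω ι l m n : Type*} [CommRing R] [Fintype m] (S : Subalgebra R (Ω → R))

theorem fun_sum_mem {s : Finset ι} {f : ι → Ω → R} (h : ∀ i ∈ s, f i ∈ S) :
    (fun ω => ∑ i ∈ s, f i ω) ∈ S :=
  Finset.sum_fn s f ▸ S.sum_mem h

theorem mulVec_apply_mem {A : Ω → Matrix l m R} (hA : ∀ i j, (fun ω => A ω i j) ∈ S)
    (v : m → R) (i : l) : (fun ω => (A ω *ᵥ v) i) ∈ S :=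
  S.fun_sum_mem fun j _ => S.mul_mem (hA i j) (S.algebraMap_mem (v j))

theorem matrix_mul_apply_mem {A : Ω → Matrix l m R} {B : Ω → Matrix m n R}
    (hA : ∀ i j, (fun ω => A ω i j) ∈ S) (hB : ∀ i j, (fun ω => B ω i j) ∈ S) (i : l) (j : n) :
    (fun ω => (A ω * B ω) i j) ∈ S :=
  S.fun_sum_mem fun k _ => S.mul_mem (hA i k) (hB k j)

theorem matrix_pow_apply_mem [DecidableEq m] {A : Ω → Matrix m m R}
    (hA : ∀ i j, (fun ω => A ω i j) ∈ S) (k : ℕ) (i j : m) :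
    (fun ω => (A ω ^ k) i j) ∈ S := by
  induction k generalizing i j with
  | zero => exact S.algebraMap_mem ((1 : Matrix m m R) i j)
  | succ k ih =>
    simp only [pow_succ]
    exact S.matrix_mul_apply_mem ih hA i j

theorem trace_pow_mem [DecidableEq m] {A : Ω → Matrix m m R}
    (hA : ∀ i j, (fun ω => A ω i j) ∈ S) (k : ℕ) : (fun ω => (A ω ^ k).trace) ∈ S :=
  S.fun_sum_mem fun i _ => S.matrix_pow_apply_mem hA k i i

end Subalgebra

section RandomMatrix

open MeasureTheory

variable {Ω : Type*} [MeasurableSpace Ω] {P : Measure Ω}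

theorem sq_integral_le_integral_sq [IsProbabilityMeasure P] {f : Ω → ℝ} (hf : MemLp f 2 P) :
    (∫ ω, f ω ∂P) ^ 2 ≤ ∫ ω, f ω ^ 2 ∂P := by
  have h := variance_nonneg f P
  rw [variance_eq_sub hf] at h
  simpa using h

theorem pow_integral_le_integral_pow [IsProbabilityMeasure P] {f : Ω → ℝ} (hf0 : ∀ ω, 0 ≤ f ω)
    (hf : Integrable f P) (n : ℕ) (hfn : Integrable (fun ω => f ω ^ n) P) :
    (∫ ω, f ω ∂P) ^ n ≤ ∫ ω, f ω ^ n ∂P :=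
  (convexOn_pow n).map_integral_le (continuous_pow n).continuousOn isClosed_Ici
    (ae_of_all P hf0) hf hfn

theorem cube_le_three_mul_sum_range_succ_sq (N : ℕ) :
    (N : ℝ) ^ 3 ≤ 3 * ∑ k ∈ Finset.range N, ((k : ℝ) + 1) ^ 2 := by
  induction N with
  | zero => simp
  | succ N ih =>
    rw [Finset.sum_range_succ]
    push_cast
    nlinarith [ih, Nat.cast_nonneg (α := ℝ) N]

variable {N : ℕ} {X : Fin N → Fin N → Ω → ℝ} {μ : ℝ}

theorem xMr_apply_mem_finiteMomentsSubalgebra [IsFiniteMeasure P]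
    (hX : ∀ i j, X i j ∈ finiteMomentsSubalgebra P) (i j : Fin N) :
    (fun ω => XMr N X ω i j) ∈ finiteMomentsSubalgebra P :=
  Subalgebra.smul_mem _ (hX i j) _

theorem integral_xMr_mulVec_one_apply (hX : ∀ i j, Integrable (X i j) P)
    (hmean : ∀ i j, ∫ ω, X i j ω ∂P = if j ≤ i then μ else 0) (k : Fin N) :
    ∫ ω, (XMr N X ω *ᵥ 1) k ∂P = ((k : ℕ) + 1) * μ / N := by
  simp only [XMr, mulVec, dotProduct, of_apply, Pi.one_apply, mul_one]
  rw [integral_finsetSum _ fun j _ => (hX k j).const_mul _]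
  simp only [integral_const_mul, hmean, ← Finset.mul_sum, Finset.sum_ite, Finset.sum_const_zero,
    add_zero, Finset.sum_const, Finset.filter_ge_eq_Iic, Fin.card_Iic, nsmul_eq_mul]
  push_cast
  ring

theorem mul_div_three_le_integral_dotProduct_xMr_mulVec_one [IsProbabilityMeasure P] [NeZero N]
    (hX : ∀ i j, X i j ∈ finiteMomentsSubalgebra P)
    (hmean : ∀ i j, ∫ ω, X i j ω ∂P = if j ≤ i then μ else 0) :
    μ ^ 2 * N / 3 ≤ ∫ ω, (XMr N X ω *ᵥ 1) ⬝ᵥ (XMr N X ω *ᵥ 1) ∂P := by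
  have hR k : (fun ω => (XMr N X ω *ᵥ 1) k) ∈ finiteMomentsSubalgebra P :=
    Subalgebra.mulVec_apply_mem _ (xMr_apply_mem_finiteMomentsSubalgebra hX) 1 k
  have hN : (0 : ℝ) < N := by simpa using NeZero.pos N
  calc μ ^ 2 * N / 3 = μ ^ 2 / N ^ 2 * ((N : ℝ) ^ 3 / 3) := by field_simp
    _ ≤ μ ^ 2 / N ^ 2 * ∑ k ∈ Finset.range N, ((k : ℝ) + 1) ^ 2 := by
      gcongr
      linarith [cube_le_three_mul_sum_range_succ_sq N]
    _ = ∑ k : Fin N, (((k : ℕ) + 1) * μ / N) ^ 2 := by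
      rw [Fin.sum_univ_eq_sum_range (fun k => (((k : ℝ) + 1) * μ / N) ^ 2), Finset.mul_sum]
      exact Finset.sum_congr rfl fun k _ => by ring
    _ ≤ ∑ k : Fin N, ∫ ω, (XMr N X ω *ᵥ 1) k ^ 2 ∂P := by
      refine Finset.sum_le_sum fun k _ => ?_
      rw [← integral_xMr_mulVec_one_apply
        (fun i j => Integrable.of_mem_finiteMomentsSubalgebra (hX i j)) hmean k]
      exact sq_integral_le_integral_sq (by exact_mod_cast hR k 2)
    _ = ∫ ω, (XMr N X ω *ᵥ 1) ⬝ᵥ (XMr N X ω *ᵥ 1) ∂P := by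
      simp only [dotProduct, ← sq]
      exact (integral_finsetSum _ fun k _ =>
        Integrable.of_mem_finiteMomentsSubalgebra (Subalgebra.pow_mem _ (hR k) 2)).symm

theorem div_le_integral_normalized_trace_pow [IsProbabilityMeasure P] [NeZero N]
    (hX : ∀ i j, X i j ∈ finiteMomentsSubalgebra P)
    (hmean : ∀ i j, ∫ ω, X i j ω ∂P = if j ≤ i then μ else 0) (n : ℕ) :
    (μ ^ 2 * N / 3) ^ n / N ≤
      ∫ ω, (1 / (N : ℝ)) * (((N : ℝ) • ((XMr N X ω)ᵀ * XMr N X ω)) ^ n).trace ∂P := by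
  set Q := fun ω => (XMr N X ω *ᵥ 1) ⬝ᵥ (XMr N X ω *ᵥ 1)
  have hA := xMr_apply_mem_finiteMomentsSubalgebra hX
  have hQ : Q ∈ finiteMomentsSubalgebra P := Subalgebra.fun_sum_mem _ fun k _ =>
    Subalgebra.mul_mem _ (Subalgebra.mulVec_apply_mem _ hA 1 k)
      (Subalgebra.mulVec_apply_mem _ hA 1 k)
  have htrace : (fun ω => (((N : ℝ) • ((XMr N X ω)ᵀ * XMr N X ω)) ^ n).trace) ∈
      finiteMomentsSubalgebra P :=
    Subalgebra.trace_pow_mem _ (fun i j => Subalgebra.smul_mem _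
      (Subalgebra.matrix_mul_apply_mem _ (fun i j => hA j i) hA i j) _) n
  have hpointwise ω : Q ω ^ n ≤ (((N : ℝ) • ((XMr N X ω)ᵀ * XMr N X ω)) ^ n).trace := by
    simpa using dotProduct_self_mulVec_one_pow_le_trace (XMr N X ω) n
  calc (μ ^ 2 * N / 3) ^ n / N ≤ (∫ ω, Q ω ∂P) ^ n / N := by
        gcongr
        exact mul_div_three_le_integral_dotProduct_xMr_mulVec_one hX hmean
    _ ≤ (∫ ω, Q ω ^ n ∂P) / N := div_le_div_of_nonneg_right
        (pow_integral_le_integral_pow (fun ω => dotProduct_self_star_nonneg _)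
          (.of_mem_finiteMomentsSubalgebra hQ) n
          (.of_mem_finiteMomentsSubalgebra (Subalgebra.pow_mem _ hQ n))) (Nat.cast_nonneg N)
    _ ≤ (∫ ω, (((N : ℝ) • ((XMr N X ω)ᵀ * XMr N X ω)) ^ n).trace ∂P) / N :=
        div_le_div_of_nonneg_right (integral_mono_of_nonneg
          (ae_of_all P fun ω => pow_nonneg (dotProduct_self_star_nonneg _) n)
          (.of_mem_finiteMomentsSubalgebra htrace) (ae_of_all P hpointwise)) (Nat.cast_nonneg N)
    _ = _ := by rw [integral_const_mul]; ring

end RandomMatrix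

theorem tendsto_mul_natCast_pow_div_atTop {c : ℝ} (hc : 0 < c) {n : ℕ} (hn : 2 ≤ n) :
    Tendsto (fun N : ℕ => (c * N) ^ n / N) atTop atTop := by
  have hpow : Tendsto (fun N : ℕ => c * (c * N) ^ (n - 1)) atTop atTop :=
    ((tendsto_pow_atTop (by omega)).comp
      (tendsto_natCast_atTop_atTop.const_mul_atTop hc)).const_mul_atTop hc
  refine hpow.congr' ?_
  filter_upwards [eventually_ne_atTop 0] with N hN
  obtain ⟨k, rfl⟩ : ∃ k, n = k + 1 := ⟨n - 1, by omega⟩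
  rw [Nat.add_sub_cancel]
  field_simp
  ring

theorem expected_normalized_trace_tendsto_atTop_general
    {Ω : Type*} [MeasureSpace Ω] [IsProbabilityMeasure (ℙ : Measure Ω)]
    (X : (N : ℕ) → Fin N → Fin N → Ω → ℝ)
    (ξ : Ω → ℝ)
    (hzero : ∀ N (i j : Fin N), i < j → ∀ ω, X N i j ω = 0)
    (hident : ∀ N (i j : Fin N), j ≤ i → IdentDistrib (X N i j) ξ ℙ ℙ)
    (hmom : ∀ p : ℕ, MemLp ξ p ℙ)
    (μ : ℝ) (hξmean : ∫ ω, ξ ω ∂ℙ = μ) (hμ : μ ≠ 0) :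
    ∀ n : ℕ, 2 ≤ n →
      Tendsto
        (fun N : ℕ => ∫ ω, (1 / (N : ℝ)) *
          Matrix.trace (((N : ℝ) • ((XMr N (X N) ω)ᵀ * XMr N (X N) ω)) ^ n) ∂ℙ)
        atTop atTop := by
  intro n hn
  have hmem N i j : X N i j ∈ finiteMomentsSubalgebra ℙ := by
    rcases le_or_gt j i with h | h
    · exact fun p => (hident N i j h).memLp_iff.2 (hmom p)
    · rw [funext (hzero N i j h)]
      exact zero_mem _
  have hmean N i j : ∫ ω, X N i j ω ∂ℙ = if j ≤ i then μ else 0 := by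
    split_ifs with h
    · rw [← hξmean]
      exact (hident N i j h).integral_eq
    · simp [hzero N i j (not_le.1 h)]
  refine tendsto_atTop_mono' atTop ?_
    (tendsto_mul_natCast_pow_div_atTop (div_pos (sq_pos_of_ne_zero hμ) three_pos) hn)
  filter_upwards [eventually_ne_atTop 0] with N hN
  have : NeZero N := ⟨hN⟩
  simpa [mul_div_right_comm] using div_le_integral_normalized_trace_pow (hmem N) (hmean N) n

/-- **Lemma 4.5 of the paper.** If the lower-triangular entries `X_{i,j}^N` are
i.i.d. with a common distribution not depending on `N`, having finite moments of
all orders and nonzero mean `μ`, then for every `n ≥ 2`,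
`E[tr((N X_N^* X_N)^n)] → ∞`, where `tr = (1/N)·Tr`. -/
theorem expected_normalized_trace_tendsto_atTop
    {Ω : Type*} [MeasureSpace Ω] [IsProbabilityMeasure (ℙ : Measure Ω)]
    (X : (N : ℕ) → Fin N → Fin N → Ω → ℝ)
    (ξ : Ω → ℝ) (hξmeas : Measurable ξ)
    (hmeas : ∀ N (i j : Fin N), Measurable (X N i j))
    (hzero : ∀ N (i j : Fin N), i < j → ∀ ω, X N i j ω = 0)
    (hindep : ∀ N, iIndepFun
      (fun p : LTri N => X N p.1.1 p.1.2) ℙ)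
    (hident : ∀ N (i j : Fin N), j ≤ i → IdentDistrib (X N i j) ξ ℙ ℙ)
    (hmom : ∀ p : ℕ, MemLp ξ p ℙ)
    (μ : ℝ) (hξmean : ∫ ω, ξ ω ∂ℙ = μ) (hμ : μ ≠ 0) :
    ∀ n : ℕ, 2 ≤ n →
      Tendsto
        (fun N : ℕ => ∫ ω, (1 / (N : ℝ)) *
          Matrix.trace (((N : ℝ) • ((XMr N (X N) ω)ᵀ * XMr N (X N) ω)) ^ n) ∂ℙ)
        atTop atTop :=
  expected_normalized_trace_tendsto_atTop_general X ξ hzero hident hmom μ hξmean hμ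
end
end
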